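/- arXiv:1603.09189 — 7 statements merged into one kernel-verified Lean document; each statement's English description precedes it below -/
import Mathlib

section
/- Let ω, δ, ε > 0 with ε ≤ 1. For any function η ∈ L²(ℝ²) whose Fourier transform η̂ is supported in the ball B_δ(ω,0) ⊆ ℝ², one has ∫_{ℝ²} |η̂(k)| dk ≤ 2√π · ε · (log(1 + δ²ε⁻²))^{1/2} · |||η|||, where |||η|||² = ∫_{ℝ²} (1 + ε⁻²((k₁−ω)² + k₂²)) |η̂(k)|² dk. -/
/-!
Cauchy–Schwarz with the weight `w k = 1 + ε⁻²|k - (ω, 0)|²` gives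
`∫ |η̂| ≤ (∫_D w⁻¹)^{1/2} (∫ w |η̂|²)^{1/2}` for any disc `D` centred at `(ω, 0)` outside which
`η̂` vanishes, and in polar coordinates `∫_{|k| < R} (1 + ε⁻²|k|²)⁻¹ dk = π ε² log (1 + ε⁻² R²)`.
Since `dist` on `ℝ × ℝ` is the sup metric, the ball `B_δ(ω, 0)` is a square, so we take
`R² = 2δ²` and absorb the extra factor by `log (1 + 2x) ≤ 2 log (1 + x)`.
-/

open MeasureTheory Set Real

theorem integral_mul_inv_one_add_mul_sq {c : ℝ} (hc : 0 < c) (R : ℝ) :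
    ∫ r in (0 : ℝ)..R, r * (1 + c * r ^ 2)⁻¹ = log (1 + c * R ^ 2) / (2 * c) := by
  have hpos (r : ℝ) : 0 < 1 + c * r ^ 2 := by positivity
  have hderiv (r : ℝ) (_ : r ∈ uIcc 0 R) :
      HasDerivAt (fun r ↦ log (1 + c * r ^ 2) / (2 * c)) (r * (1 + c * r ^ 2)⁻¹) r := by
    refine (((((hasDerivAt_pow 2 r).const_mul c).const_add 1).log (hpos r).ne').div_const
      (2 * c)).congr_deriv ?_
    field_simp
    ring
  have hcont : Continuous fun r : ℝ ↦ r * (1 + c * r ^ 2)⁻¹ :=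
    continuous_id.mul ((by fun_prop : Continuous fun r : ℝ ↦ 1 + c * r ^ 2).inv₀
      fun r ↦ (hpos r).ne')
  rw [intervalIntegral.integral_eq_sub_of_hasDerivAt hderiv (hcont.intervalIntegrable _ _)]
  simp

theorem integral_comp_sub_sq_add_sub_sq (f : ℝ → ℝ) (p : ℝ × ℝ) :
    ∫ k : ℝ × ℝ, f ((k.1 - p.1) ^ 2 + (k.2 - p.2) ^ 2) =
      2 * π * ∫ r in Ioi (0 : ℝ), r * f (r ^ 2) := by
  calc ∫ k : ℝ × ℝ, f ((k.1 - p.1) ^ 2 + (k.2 - p.2) ^ 2)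
      = ∫ k : ℝ × ℝ, f (k.1 ^ 2 + k.2 ^ 2) :=
        integral_sub_right_eq_self (fun k : ℝ × ℝ ↦ f (k.1 ^ 2 + k.2 ^ 2)) p
    _ = ∫ q in polarCoord.target, q.1 * f (q.1 ^ 2) := by
        rw [← integral_comp_polarCoord_symm]
        refine setIntegral_congr_fun polarCoord.open_target.measurableSet fun q _ ↦ ?_
        simp [mul_pow, ← mul_add, cos_sq_add_sin_sq]
    _ = (∫ r in Ioi (0 : ℝ), r * f (r ^ 2)) * ∫ _ in Ioo (-π) π, (1 : ℝ) := by
        rw [polarCoord_target, Measure.volume_eq_prod, ← Measure.prod_restrict]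
        simpa only [mul_one] using integral_prod_mul (μ := volume.restrict (Ioi 0))
          (ν := volume.restrict (Ioo (-π) π)) (fun r ↦ r * f (r ^ 2)) (fun _ ↦ (1 : ℝ))
    _ = 2 * π * ∫ r in Ioi (0 : ℝ), r * f (r ^ 2) := by
        rw [setIntegral_const, volume_real_Ioo_of_le (by linarith [pi_pos]), smul_eq_mul, mul_one]
        ring

theorem setIntegral_inv_one_add_mul_sub_sq_add_sub_sq {c ρ : ℝ} (hc : 0 < c) (hρ : 0 ≤ ρ)
    (p : ℝ × ℝ) :
    ∫ k in {k : ℝ × ℝ | (k.1 - p.1) ^ 2 + (k.2 - p.2) ^ 2 < ρ},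
      (1 + c * ((k.1 - p.1) ^ 2 + (k.2 - p.2) ^ 2))⁻¹ = π / c * log (1 + c * ρ) := by
  set F : ℝ → ℝ := (Iio ρ).indicator fun s ↦ (1 + c * s)⁻¹
  have hradial :
      ∫ r in Ioi (0 : ℝ), r * F (r ^ 2) = ∫ r in (0 : ℝ)..√ρ, r * (1 + c * r ^ 2)⁻¹ := by
    have hF (r : ℝ) (hr : r ∈ Ioi 0) :
        r * F (r ^ 2) = (Iio √ρ).indicator (fun r ↦ r * (1 + c * r ^ 2)⁻¹) r := by
      simp only [F, indicator, mem_Iio, lt_sqrt hr.le, mul_ite, mul_zero]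
    rw [setIntegral_congr_fun measurableSet_Ioi hF, setIntegral_indicator measurableSet_Iio,
      Ioi_inter_Iio, ← integral_Ioc_eq_integral_Ioo,
      intervalIntegral.integral_of_le (sqrt_nonneg ρ)]
  rw [← integral_indicator (measurableSet_lt (by fun_prop) measurable_const)]
  calc ∫ k, {k : ℝ × ℝ | (k.1 - p.1) ^ 2 + (k.2 - p.2) ^ 2 < ρ}.indicator
        (fun k ↦ (1 + c * ((k.1 - p.1) ^ 2 + (k.2 - p.2) ^ 2))⁻¹) k
      = ∫ k : ℝ × ℝ, F ((k.1 - p.1) ^ 2 + (k.2 - p.2) ^ 2) := by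
        simp only [F, indicator, mem_ofPred_eq, mem_Iio]
    _ = π / c * log (1 + c * ρ) := by
        rw [integral_comp_sub_sq_add_sub_sq, hradial, integral_mul_inv_one_add_mul_sq hc,
          sq_sqrt hρ]
        field_simp

theorem integral_le_sqrt_integral_inv_mul_sqrt_integral_mul_sq {α : Type*} [MeasurableSpace α]
    {μ : Measure α} {g w : α → ℝ} (hg : 0 ≤ g) (hw : ∀ x, 0 < w x)
    (hgm : AEStronglyMeasurable g μ) (hwinv : Integrable (fun x ↦ (w x)⁻¹) μ)
    (hwg : Integrable (fun x ↦ w x * g x ^ 2) μ) :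
    ∫ x, g x ∂μ ≤ √(∫ x, (w x)⁻¹ ∂μ) * √(∫ x, w x * g x ^ 2 ∂μ) := by
  have hwm : AEMeasurable w μ := by simpa only [Pi.inv_def, inv_inv] using hwinv.1.aemeasurable.inv
  have hu2 (x : α) : √(w x)⁻¹ ^ 2 = (w x)⁻¹ := sq_sqrt (inv_nonneg.2 (hw x).le)
  have hv2 (x : α) : (√(w x) * g x) ^ 2 = w x * g x ^ 2 := by rw [mul_pow, sq_sqrt (hw x).le]
  have hu : MemLp (fun x ↦ √(w x)⁻¹) (ENNReal.ofReal 2) μ := by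
    rw [ENNReal.ofReal_ofNat]
    exact (memLp_two_iff_integrable_sq (continuous_sqrt.comp_aestronglyMeasurable hwinv.1)).2
      (by simpa only [hu2] using hwinv)
  have hv : MemLp (fun x ↦ √(w x) * g x) (ENNReal.ofReal 2) μ := by
    rw [ENNReal.ofReal_ofNat]
    exact (memLp_two_iff_integrable_sq (hwm.sqrt.mul hgm.aemeasurable).aestronglyMeasurable).2
      (by simpa only [Pi.mul_apply, hv2] using hwg)
  have hg_eq (x : α) : g x = √(w x)⁻¹ * (√(w x) * g x) := by
    rw [← mul_assoc, ← sqrt_mul (inv_nonneg.2 (hw x).le), inv_mul_cancel₀ (hw x).ne', sqrt_one,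
      one_mul]
  calc ∫ x, g x ∂μ = ∫ x, √(w x)⁻¹ * (√(w x) * g x) ∂μ := by simp only [← hg_eq]
    _ ≤ (∫ x, √(w x)⁻¹ ^ (2 : ℝ) ∂μ) ^ (1 / 2 : ℝ) *
          (∫ x, (√(w x) * g x) ^ (2 : ℝ) ∂μ) ^ (1 / 2 : ℝ) :=
        integral_mul_le_Lp_mul_Lq_of_nonneg Real.HolderConjugate.two_two
          (.of_forall fun x ↦ sqrt_nonneg _) (.of_forall fun x ↦ mul_nonneg (sqrt_nonneg _) (hg x))
          hu hv
    _ = √(∫ x, (w x)⁻¹ ∂μ) * √(∫ x, w x * g x ^ 2 ∂μ) := by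
        simp only [rpow_two, hu2, hv2, ← sqrt_eq_rpow]

theorem ball_subset_setOf_sub_sq_add_sub_sq_lt (p : ℝ × ℝ) (r : ℝ) :
    Metric.ball p r ⊆ {k : ℝ × ℝ | (k.1 - p.1) ^ 2 + (k.2 - p.2) ^ 2 < 2 * r ^ 2} := by
  intro k hk
  rw [Metric.mem_ball, Prod.dist_eq, max_lt_iff, dist_eq, dist_eq] at hk
  have h1 := pow_lt_pow_left₀ hk.1 (abs_nonneg _) two_ne_zero
  have h2 := pow_lt_pow_left₀ hk.2 (abs_nonneg _) two_ne_zero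
  rw [sq_abs] at h1 h2
  rw [mem_ofPred_eq]
  linarith

theorem setOf_sub_sq_add_sub_sq_lt_subset_closedBall (p : ℝ × ℝ) (ρ : ℝ) :
    {k : ℝ × ℝ | (k.1 - p.1) ^ 2 + (k.2 - p.2) ^ 2 < ρ} ⊆ Metric.closedBall p √ρ := by
  intro k hk
  rw [mem_ofPred_eq] at hk
  rw [Metric.mem_closedBall, Prod.dist_eq, max_le_iff, dist_eq, dist_eq]
  exact ⟨abs_le_sqrt (by nlinarith [sq_nonneg (k.2 - p.2)]),
    abs_le_sqrt (by nlinarith [sq_nonneg (k.1 - p.1)])⟩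

theorem integral_norm_le_of_eq_zero_outside_disc {E : Type*} [NormedAddCommGroup E]
    {f : ℝ × ℝ → E} {c ρ : ℝ} (hc : 0 < c) (hρ : 0 ≤ ρ) (p : ℝ × ℝ) (hf : MemLp f 2)
    (hsupp : ∀ k, ρ ≤ (k.1 - p.1) ^ 2 + (k.2 - p.2) ^ 2 → f k = 0) :
    ∫ k, ‖f k‖ ≤ √(π / c * log (1 + c * ρ)) *
      √(∫ k, (1 + c * ((k.1 - p.1) ^ 2 + (k.2 - p.2) ^ 2)) * ‖f k‖ ^ 2) := by
  set D := {k : ℝ × ℝ | (k.1 - p.1) ^ 2 + (k.2 - p.2) ^ 2 < ρ}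
  have hD : MeasurableSet D := measurableSet_lt (by fun_prop) measurable_const
  have hw (k : ℝ × ℝ) : 0 < 1 + c * ((k.1 - p.1) ^ 2 + (k.2 - p.2) ^ 2) := by positivity
  have hw_cont : Continuous fun k : ℝ × ℝ ↦ 1 + c * ((k.1 - p.1) ^ 2 + (k.2 - p.2) ^ 2) := by
    fun_prop
  have hf_zero (k : ℝ × ℝ) (hk : k ∉ D) : f k = 0 := hsupp k (not_lt.1 hk)
  have hwinv : IntegrableOn (fun k ↦ (1 + c * ((k.1 - p.1) ^ 2 + (k.2 - p.2) ^ 2))⁻¹) D :=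
    ((hw_cont.inv₀ fun k ↦ (hw k).ne').continuousOn.integrableOn_compact
      (isCompact_closedBall p √ρ)).mono_set (setOf_sub_sq_add_sub_sq_lt_subset_closedBall p ρ)
  have hwf :
      IntegrableOn (fun k ↦ (1 + c * ((k.1 - p.1) ^ 2 + (k.2 - p.2) ^ 2)) * ‖f k‖ ^ 2) D := by
    refine Integrable.mono'
      ((hf.integrable_norm_pow two_ne_zero).integrableOn.const_mul (1 + c * ρ))
      (hw_cont.aestronglyMeasurable.mul (hf.1.norm.pow 2)).restrict
      ((ae_restrict_iff' hD).2 (.of_forall fun k hk ↦ ?_))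
    rw [norm_of_nonneg (mul_nonneg (hw k).le (sq_nonneg _))]
    gcongr
    exact hk.le
  have hD_compl {g : ℝ × ℝ → E → ℝ} (hg : ∀ k, g k 0 = 0) :
      ∫ k in D, g k (f k) = ∫ k, g k (f k) :=
    setIntegral_eq_integral_of_forall_compl_eq_zero fun k hk ↦ by rw [hf_zero k hk, hg]
  rw [← hD_compl (g := fun _ x ↦ ‖x‖) (by simp),
    ← hD_compl (g := fun k x ↦ (1 + c * ((k.1 - p.1) ^ 2 + (k.2 - p.2) ^ 2)) * ‖x‖ ^ 2) (by simp),
    ← setIntegral_inv_one_add_mul_sub_sq_add_sub_sq hc hρ p]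
  exact integral_le_sqrt_integral_inv_mul_sqrt_integral_mul_sq (fun _ ↦ norm_nonneg _) hw
    hf.1.norm.restrict hwinv hwf

theorem log_one_add_two_mul_le {x : ℝ} (hx : 0 ≤ x) : log (1 + 2 * x) ≤ 2 * log (1 + x) := by
  rw [← Nat.cast_ofNat, ← log_pow]
  exact log_le_log (by positivity) (by push_cast; nlinarith [sq_nonneg x])

theorem l1_bound_of_support_in_ball_general (ω δ ε : ℝ)
    (hε : 0 < ε) (ηhat : ℝ × ℝ → ℂ)
    (hL2 : MemLp ηhat 2 (volume : Measure (ℝ × ℝ)))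
    (hsupp : ∀ k : ℝ × ℝ, δ ≤ dist k ((ω, 0) : ℝ × ℝ) → ηhat k = 0) :
    (∫ k : ℝ × ℝ, ‖ηhat k‖) ≤
      2 * Real.sqrt Real.pi * ε * Real.sqrt (Real.log (1 + δ ^ 2 * (ε ^ 2)⁻¹)) *
        Real.sqrt (∫ k : ℝ × ℝ,
          (1 + (ε ^ 2)⁻¹ * ((k.1 - ω) ^ 2 + k.2 ^ 2)) * ‖ηhat k‖ ^ 2) := by
  have hdisc (k : ℝ × ℝ) (hk : 2 * δ ^ 2 ≤ (k.1 - ω) ^ 2 + (k.2 - 0) ^ 2) : ηhat k = 0 :=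
    hsupp k <| not_lt.1 fun hball ↦
      (ball_subset_setOf_sub_sq_add_sub_sq_lt (ω, 0) δ hball).not_ge hk
  have hbound := integral_norm_le_of_eq_zero_outside_disc (c := (ε ^ 2)⁻¹) (by positivity)
    (by positivity) (ω, 0) hL2 hdisc
  simp only [sub_zero] at hbound
  refine hbound.trans (mul_le_mul_of_nonneg_right ?_ (sqrt_nonneg _))
  set L := log (1 + δ ^ 2 * (ε ^ 2)⁻¹)
  have hL : 0 ≤ L := log_nonneg (le_add_of_nonneg_right (by positivity))
  have hlog : log (1 + (ε ^ 2)⁻¹ * (2 * δ ^ 2)) ≤ 2 * L := by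
    rw [show (ε ^ 2)⁻¹ * (2 * δ ^ 2) = 2 * (δ ^ 2 * (ε ^ 2)⁻¹) by ring]
    exact log_one_add_two_mul_le (by positivity)
  have hπε : 0 ≤ π * ε ^ 2 := by positivity
  calc √(π / (ε ^ 2)⁻¹ * log (1 + (ε ^ 2)⁻¹ * (2 * δ ^ 2)))
      ≤ √((2 * √π * ε * √L) ^ 2) := by
        rw [div_inv_eq_mul, mul_pow, mul_pow, mul_pow, sq_sqrt pi_pos.le, sq_sqrt hL]
        refine sqrt_le_sqrt ?_
        nlinarith [mul_le_mul_of_nonneg_left hlog hπε, mul_nonneg hπε hL]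
    _ = 2 * √π * ε * √L := sqrt_sq (by positivity)

/-- (Proposition `sup estimate`.) If `η̂` is supported in the ball
`B_δ(ω,0) ⊆ ℝ²`, then its `L¹` norm is controlled by `2√π ε (log(1+δ²ε⁻²))^{1/2}`
times the scaled norm `|||η|||`. -/
theorem l1_bound_of_support_in_ball (ω δ ε : ℝ) (hω : 0 < ω) (hδ : 0 < δ)
    (hε : 0 < ε) (hε1 : ε ≤ 1) (ηhat : ℝ × ℝ → ℂ) (hmeas : Measurable ηhat)
    (hL2 : MemLp ηhat 2 (volume : Measure (ℝ × ℝ)))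
    (hsupp : ∀ k : ℝ × ℝ, δ ≤ dist k ((ω, 0) : ℝ × ℝ) → ηhat k = 0) :
    (∫ k : ℝ × ℝ, ‖ηhat k‖) ≤
      2 * Real.sqrt Real.pi * ε * Real.sqrt (Real.log (1 + δ ^ 2 * (ε ^ 2)⁻¹)) *
        Real.sqrt (∫ k : ℝ × ℝ,
          (1 + (ε ^ 2)⁻¹ * ((k.1 - ω) ^ 2 + k.2 ^ 2)) * ‖ηhat k‖ ^ 2) :=
  l1_bound_of_support_in_ball_general ω δ ε hε ηhat hL2 hsupp
end

section
/- Fix 0 < β < 1/3 and let f(s) = s·coth(s) (with f(0) = 1). Then the function c²(s) = (1 + βs²)/f(s) defined for s ≥ 0 attains a global minimum at a unique point ω > 0; in particular c²(s) > c²(ω) for all s ≥ 0, s ≠ ω. -/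
/-- `f(s) = s coth s`, extended continuously by `f(0) = 1`. -/
noncomputable def fcoth (s : ℝ) : ℝ := if s = 0 then 1 else s * (Real.cosh s / Real.sinh s)

/-!
On `(0, ∞)` the derivative of `c²` has the sign of
`φ = (c²)' f² / (2s) = ((βs² - 1) sinh s cosh s + (1 + βs²) s) / (2 s sinh² s)`, and
`φ' = (1 + βs²) G / (2 s² sinh³ s)` with `G = sinh² s cosh s + s sinh s - 2 s² cosh s`, which is
positive by comparison with the Taylor polynomials of `sinh` and `cosh`. So `φ` is strictly
increasing; it is negative near `0` (its limit there is `β - 1/3`) and positive once `βs² ≥ 1`,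
hence it has a single zero `ω`, where `c²` switches from decreasing to increasing.
At `0`, `c²` is continuous because `sinh s / s` is the difference quotient of `sinh` at `0`.
-/

open Real Set Filter Topology

lemma pos_of_eq_zero_of_hasDerivAt_pos {f f' : ℝ → ℝ} {a x : ℝ}
    (hf : ∀ y, HasDerivAt f (f' y) y) (hfa : f a = 0) (hf' : ∀ y, a < y → 0 < f' y)
    (hx : a < x) : 0 < f x := by
  have hmono : StrictMonoOn f (Ici a) :=
    strictMonoOn_of_deriv_pos (convex_Ici a) (fun y _ => (hf y).continuousAt.continuousWithinAt)
      fun y hy => by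
        rw [interior_Ici] at hy
        exact (hf y).deriv ▸ hf' y hy
  simpa [hfa] using hmono self_mem_Ici hx.le hx

namespace Real

variable {x : ℝ}

lemma one_add_sq_div_two_lt_cosh (hx : 0 < x) : 1 + x ^ 2 / 2 < cosh x := by
  have := pos_of_eq_zero_of_hasDerivAt_pos (f := fun z => cosh z - 1 - z ^ 2 / 2)
    (fun y => ((hasDerivAt_cosh y).sub_const 1).sub ((hasDerivAt_pow 2 y).div_const 2))
    (by simp) (fun y hy => by norm_num; exact hy) hx
  linarith

lemma add_pow_three_div_six_lt_sinh (hx : 0 < x) : x + x ^ 3 / 6 < sinh x := by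
  have := pos_of_eq_zero_of_hasDerivAt_pos (f := fun z => sinh z - z - z ^ 3 / 6)
    (fun y => ((hasDerivAt_sinh y).sub (hasDerivAt_id y)).sub ((hasDerivAt_pow 3 y).div_const 6))
    (by simp) (fun y hy => by norm_num; linarith [one_add_sq_div_two_lt_cosh hy]) hx
  linarith

lemma sinh_lt_mul_cosh (hx : 0 < x) : sinh x < x * cosh x := by
  have := pos_of_eq_zero_of_hasDerivAt_pos (f := fun z => z * cosh z - sinh z)
    (fun y => ((hasDerivAt_id y).mul (hasDerivAt_cosh y)).sub (hasDerivAt_sinh y))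
    (by simp) (fun y hy => by simpa using mul_pos hy (sinh_pos_iff.2 hy)) hx
  linarith

lemma mul_cosh_sub_sinh_lt (hx : 0 < x) : x * cosh x - sinh x < x ^ 3 / 3 * cosh x := by
  have := pos_of_eq_zero_of_hasDerivAt_pos
    (f := fun z => z ^ 3 / 3 * cosh z + sinh z - z * cosh z)
    (fun y => (((hasDerivAt_pow 3 y).div_const 3).mul (hasDerivAt_cosh y)).add
      (hasDerivAt_sinh y) |>.sub ((hasDerivAt_id y).mul (hasDerivAt_cosh y)))
    (by simp) (fun y hy => by
      have := sinh_lt_mul_cosh hy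
      have := sinh_pos_iff.2 hy
      norm_num
      nlinarith [mul_pos hy (sub_pos.2 this), mul_pos (pow_pos hy 3) this]) hx
  linarith

lemma two_mul_sq_mul_cosh_lt (hx : 0 < x) :
    2 * x ^ 2 * cosh x < sinh x ^ 2 * cosh x + x * sinh x := by
  have hsinh := add_pow_three_div_six_lt_sinh hx
  have hsinh_sq : (x + x ^ 3 / 6) ^ 2 < sinh x ^ 2 :=
    pow_lt_pow_left₀ hsinh (by positivity) two_ne_zero
  have hcosh := mul_cosh_sub_sinh_lt hx
  have hc := cosh_pos x
  nlinarith [mul_pos (pow_pos hx 6) hc, mul_lt_mul_of_pos_right hsinh_sq hc,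
    mul_lt_mul_of_pos_left hcosh hx]

lemma dslope_sinh_zero_pos (x : ℝ) : 0 < dslope sinh 0 x := by
  rcases eq_or_ne x 0 with rfl | hx
  · simp
  · rw [dslope_of_ne _ hx, slope_def_field, sinh_zero, sub_zero, sub_zero]
    rcases hx.lt_or_gt with hx | hx
    · exact div_pos_of_neg_of_neg (sinh_neg_iff.2 hx) hx
    · exact div_pos (sinh_pos_iff.2 hx) hx

end Real

lemma fcoth_eq_cosh_div_dslope_sinh : fcoth = fun x => cosh x / dslope sinh 0 x := by
  ext x
  rcases eq_or_ne x 0 with rfl | hx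
  · simp [fcoth]
  · rw [fcoth, if_neg hx, dslope_of_ne _ hx, slope_def_field, sinh_zero, sub_zero, sub_zero]
    field_simp

lemma continuous_fcoth : Continuous fcoth := by
  have hdslope : Continuous (dslope sinh 0) := continuousOn_univ.1 <|
    (continuousOn_dslope univ_mem).2 ⟨continuous_sinh.continuousOn, differentiable_sinh 0⟩
  rw [fcoth_eq_cosh_div_dslope_sinh]
  exact continuous_cosh.div hdslope fun x => (dslope_sinh_zero_pos x).ne'

lemma fcoth_pos (x : ℝ) : 0 < fcoth x := by
  rw [fcoth_eq_cosh_div_dslope_sinh]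
  exact div_pos (cosh_pos x) (dslope_sinh_zero_pos x)

noncomputable def waveSpeedSq (β s : ℝ) : ℝ := (1 + β * s ^ 2) / fcoth s

noncomputable def dispersionPhi (β s : ℝ) : ℝ :=
  ((β * s ^ 2 - 1) * sinh s * cosh s + (1 + β * s ^ 2) * s) / (2 * s * sinh s ^ 2)

section

variable {β s : ℝ}

lemma continuous_waveSpeedSq : Continuous (waveSpeedSq β) :=
  (by fun_prop : Continuous fun s => 1 + β * s ^ 2).div continuous_fcoth fun s => (fcoth_pos s).ne'

lemma hasDerivAt_waveSpeedSq (hs : 0 < s) :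
    HasDerivAt (waveSpeedSq β) (dispersionPhi β s * (2 * sinh s ^ 2 / (s * cosh s ^ 2))) s := by
  have hC := cosh_pos s
  have heq : (fun x => (1 + β * x ^ 2) * sinh x / (x * cosh x)) =ᶠ[𝓝 s] waveSpeedSq β := by
    filter_upwards [Ioi_mem_nhds hs] with x hx
    have := sinh_pos_iff.2 (mem_Ioi.1 hx)
    rw [waveSpeedSq, fcoth, if_neg (ne_of_gt hx)]
    field_simp
  refine HasDerivAt.congr_of_eventuallyEq ?_ heq.symm
  have h := ((((hasDerivAt_pow 2 s).const_mul β).const_add 1).mul (hasDerivAt_sinh s)).div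
    ((hasDerivAt_id s).mul (hasDerivAt_cosh s)) (mul_pos hs hC).ne'
  refine h.congr_deriv ?_
  simp only [Pi.mul_apply, id_eq, dispersionPhi]
  field_simp
  linear_combination (1 + β * s ^ 2) * s * cosh_sq s

lemma hasDerivAt_dispersionPhi (hs : 0 < s) :
    HasDerivAt (dispersionPhi β)
      ((1 + β * s ^ 2) * (sinh s ^ 2 * cosh s + s * sinh s - 2 * s ^ 2 * cosh s) /
        (2 * s ^ 2 * sinh s ^ 3)) s := by
  have hS := sinh_pos_iff.2 hs
  have hN := (((((hasDerivAt_pow 2 s).const_mul β).sub_const 1).mul (hasDerivAt_sinh s)).mul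
    (hasDerivAt_cosh s)).add
      ((((hasDerivAt_pow 2 s).const_mul β).const_add 1).mul (hasDerivAt_id s))
  have hD := ((hasDerivAt_id s).const_mul 2).mul ((hasDerivAt_sinh s).pow 2)
  refine (hN.div hD (by positivity : 2 * s * sinh s ^ 2 ≠ 0)).congr_deriv ?_
  simp only [Pi.mul_apply, Pi.add_apply, Pi.pow_apply, id_eq]
  field_simp
  linear_combination s * sinh s ^ 2 * (1 - β * s ^ 2) * cosh_sq s

lemma strictMonoOn_dispersionPhi (hβ : 0 ≤ β) : StrictMonoOn (dispersionPhi β) (Ioi 0) :=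
  strictMonoOn_of_deriv_pos (convex_Ioi 0)
    (fun x hx => (hasDerivAt_dispersionPhi hx).continuousAt.continuousWithinAt) fun x hx => by
      rw [interior_Ioi, mem_Ioi] at hx
      have hS := sinh_pos_iff.2 hx
      have hG := sub_pos.2 (two_mul_sq_mul_cosh_lt hx)
      have hu : 0 < 1 + β * x ^ 2 := by positivity
      rw [(hasDerivAt_dispersionPhi hx).deriv]
      exact div_pos (mul_pos hu hG) (by positivity)

lemma dispersionPhi_neg {a : ℝ} (hβ : 0 ≤ β) (ha : 0 < a)
    (h : β * (cosh a ^ 2 + 1) < 2 / 3) : dispersionPhi β a < 0 := by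
  have hS := sinh_pos_iff.2 ha
  have hC := cosh_pos a
  have hupper : sinh a * cosh a ≤ a * cosh a ^ 2 := by
    nlinarith [mul_lt_mul_of_pos_right (sinh_lt_mul_cosh ha) hC]
  have hlower : a + 2 * a ^ 3 / 3 < sinh a * cosh a := by
    nlinarith [add_pow_three_div_six_lt_sinh (mul_pos two_pos ha), sinh_two_mul a]
  refine div_neg_of_neg_of_pos ?_ (by positivity)
  nlinarith [mul_le_mul_of_nonneg_left hupper (by positivity : 0 ≤ β * a ^ 2),
    mul_pos (pow_pos ha 3) (sub_pos.2 h)]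

lemma exists_dispersionPhi_neg (hβ₀ : 0 ≤ β) (hβ : β < 1 / 3) :
    ∃ a, 0 < a ∧ dispersionPhi β a < 0 := by
  have hcont : Continuous fun x => β * (cosh x ^ 2 + 1) := by fun_prop
  have hsmall : ∀ᶠ x in 𝓝[>] 0, β * (cosh x ^ 2 + 1) < 2 / 3 :=
    ((hcont.tendsto 0).mono_left nhdsWithin_le_nhds).eventually_lt_const (by norm_num; linarith)
  obtain ⟨a, hsmall, ha⟩ := (hsmall.and self_mem_nhdsWithin).exists
  exact ⟨a, ha, dispersionPhi_neg hβ₀ ha hsmall⟩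

lemma dispersionPhi_pos (hs : 0 < s) (h : 1 ≤ β * s ^ 2) : 0 < dispersionPhi β s := by
  have hSC := mul_nonneg (mul_nonneg (sub_nonneg.2 h) (sinh_pos_iff.2 hs).le) (cosh_pos s).le
  have hS := sinh_pos_iff.2 hs
  refine div_pos ?_ (by positivity)
  nlinarith

lemma exists_dispersionPhi_pos (hβ : 0 < β) : ∃ b, 0 < b ∧ 0 < dispersionPhi β b := by
  refine ⟨(√β)⁻¹, by positivity, dispersionPhi_pos (by positivity) ?_⟩
  rw [inv_pow, sq_sqrt hβ.le, mul_inv_cancel₀ hβ.ne']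

end

lemma StrictMonoOn.exists_sign_change {α : Type*} [LinearOrder α] [TopologicalSpace α]
    {φ : α → ℝ} {S : Set α} {a b : α} (hφ : StrictMonoOn φ S) (hS : IsPreconnected S)
    (hcont : ContinuousOn φ S) (ha : a ∈ S) (hφa : φ a < 0) (hb : b ∈ S) (hφb : 0 < φ b) :
    ∃ ω ∈ S, (∀ x ∈ S, x < ω → φ x < 0) ∧ ∀ x ∈ S, ω < x → 0 < φ x := by
  obtain ⟨ω, hω, hφω⟩ := hS.intermediate_value ha hb hcont ⟨hφa.le, hφb.le⟩
  exact ⟨ω, hω, fun x hx hxω => hφω ▸ hφ hx hω hxω,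
    fun x hx hωx => hφω ▸ hφ hω hx hωx⟩

lemma existsUnique_strictMin_of_deriv_sign {c c' : ℝ → ℝ} {ω : ℝ} (hω : 0 < ω)
    (hcont : ContinuousOn c (Ici 0)) (hc : ∀ x, 0 < x → HasDerivAt c (c' x) x)
    (hneg : ∀ x, 0 < x → x < ω → c' x < 0) (hpos : ∀ x, ω < x → 0 < c' x) :
    ∃! ω, 0 < ω ∧ ∀ s, 0 ≤ s → s ≠ ω → c ω < c s := by
  have hanti : StrictAntiOn c (Icc 0 ω) :=
    strictAntiOn_of_deriv_neg (convex_Icc 0 ω) (hcont.mono Icc_subset_Ici_self)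
      fun x hx => by
        rw [interior_Icc] at hx
        exact (hc x hx.1).deriv ▸ hneg x hx.1 hx.2
  have hmono : StrictMonoOn c (Ici ω) :=
    strictMonoOn_of_deriv_pos (convex_Ici ω) (hcont.mono (Ici_subset_Ici.2 hω.le))
      fun x hx => by
        rw [interior_Ici] at hx
        exact (hc x (hω.trans hx)).deriv ▸ hpos x hx
  have hmin : ∀ s, 0 ≤ s → s ≠ ω → c ω < c s := fun s hs hsω =>
    hsω.lt_or_gt.elim (fun h => hanti ⟨hs, h.le⟩ ⟨hω.le, le_rfl⟩ h)
      fun h => hmono self_mem_Ici h.le h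
  refine ⟨ω, ⟨hω, hmin⟩, fun ω' ⟨hω', hmin'⟩ => ?_⟩
  by_contra hne
  exact (hmin ω' hω'.le hne).not_gt (hmin' ω hω.le (Ne.symm hne))

/-- For `0 < β < 1/3` the squared wave speed
`c²(s) = (1 + βs²)/f(s)`, `s ≥ 0`, attains its global minimum at a unique `ω > 0`:
`c²(s) > c²(ω)` for all `s ≥ 0` with `s ≠ ω`. -/
theorem dispersion_min_unique (β : ℝ) (hβ0 : 0 < β) (hβ : β < 1 / 3) :
    ∃! ω : ℝ, 0 < ω ∧ ∀ s : ℝ, 0 ≤ s → s ≠ ω →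
      (1 + β * ω ^ 2) / fcoth ω < (1 + β * s ^ 2) / fcoth s := by
  obtain ⟨a, ha, hφa⟩ := exists_dispersionPhi_neg hβ0.le hβ
  obtain ⟨b, hb, hφb⟩ := exists_dispersionPhi_pos hβ0
  obtain ⟨ω, hω, hφneg, hφpos⟩ := (strictMonoOn_dispersionPhi hβ0.le).exists_sign_change
    isPreconnected_Ioi (fun x hx => (hasDerivAt_dispersionPhi hx).continuousAt.continuousWithinAt)
    ha hφa hb hφb
  have hfactor : ∀ x : ℝ, 0 < x → 0 < 2 * sinh x ^ 2 / (x * cosh x ^ 2) := fun x hx => by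
    have := sinh_pos_iff.2 hx
    positivity
  exact existsUnique_strictMin_of_deriv_sign hω continuous_waveSpeedSq.continuousOn
    (fun x hx => hasDerivAt_waveSpeedSq hx)
    (fun x hx hxω => mul_neg_of_neg_of_pos (hφneg x hx hxω) (hfactor x hx))
    fun x hxω => mul_pos (hφpos x (hω.trans hxω) hxω) (hfactor x (hω.trans hxω))
end

section
/- Let ω > 0, 0 < ε ≤ 1, θ ∈ (0,1), and let η, v ∈ L²(ℝ²) have Fourier transforms supported in B_δ(ω,0) with 0 < δ < ω, satisfying ‖ |k−(ω,0)| η̂ ‖_{L²} ≤ ε|||η||| and ‖η̂‖_{L¹} ≤ ε^θ |||η||| (and similarly for v). Then for any Fourier multiplier operator m(D) whose symbol m is Lipschitz near (2ω,0), one has ‖m(D)(ηv) − m(2ω,0) ηv‖_{L²} ≲ ε^{1+θ} |||η||| · |||v|||, with implicit constant depending only on ω, δ and the Lipschitz constant of m. -/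
/-!
On the Fourier side the error is `(m k - m (2ω,0)) * (η̂ * v̂)(k)`: by Plancherel,
`‖m(D)(ηv) - m(2ω,0) ηv‖₂` is the `L²` norm of this function. The convolution `η̂ * v̂` is
supported in `B_{2δ}(2ω,0)`, where `m` is Lipschitz at `(2ω,0)`, and the triangle inequality
`|k - (2ω,0)| ≤ |k - s - (ω,0)| + |s - (ω,0)|` splits the weight `|k - (2ω,0)|` between the two
factors of the convolution integral. Young's inequality `‖F * G‖₂ ≤ ‖F‖₂ ‖G‖₁` bounds the two
resulting terms by `‖|· - (ω,0)| η̂‖₂ ‖v̂‖₁ ≤ ε^{1+θ} |||η||| |||v|||` and its mirror image.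
-/

open MeasureTheory
open scoped ENNReal

section Integral

variable {α : Type*} [MeasurableSpace α] {μ : Measure α}

theorem sq_lintegral_mul_le {f g : α → ℝ≥0∞} (hf : AEMeasurable f μ) (hg : AEMeasurable g μ) :
    (∫⁻ a, f a * g a ∂μ) ^ 2 ≤ (∫⁻ a, f a ^ 2 * g a ∂μ) * ∫⁻ a, g a ∂μ := by
  have h := ENNReal.lintegral_mul_norm_pow_le ((hf.pow_const 2).mul hg) hg
    (p := ((2 : ℕ) : ℝ)⁻¹) (q := ((2 : ℕ) : ℝ)⁻¹) (by positivity) (by positivity) (by norm_num)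
  have hsqrt : ∀ a, (f a ^ 2 * g a) ^ ((2 : ℕ) : ℝ)⁻¹ * g a ^ ((2 : ℕ) : ℝ)⁻¹ = f a * g a := by
    intro a
    rw [← ENNReal.mul_rpow_of_nonneg _ _ (by positivity), mul_assoc, ← sq, ← mul_pow,
      ENNReal.pow_rpow_inv_natCast two_ne_zero]
  simp only [Pi.mul_apply, hsqrt] at h
  calc (∫⁻ a, f a * g a ∂μ) ^ 2
      ≤ ((∫⁻ a, f a ^ 2 * g a ∂μ) ^ ((2 : ℕ) : ℝ)⁻¹ * (∫⁻ a, g a ∂μ) ^ ((2 : ℕ) : ℝ)⁻¹) ^ 2 :=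
        pow_le_pow_left₀ zero_le h 2
    _ = (∫⁻ a, f a ^ 2 * g a ∂μ) * ∫⁻ a, g a ∂μ := by
        rw [mul_pow, ENNReal.rpow_inv_natCast_pow two_ne_zero,
          ENNReal.rpow_inv_natCast_pow two_ne_zero]

theorem eLpNorm_two_sq_eq_lintegral {E : Type*} [ENorm E] (F : α → E) :
    eLpNorm F 2 μ ^ 2 = ∫⁻ x, ‖F x‖ₑ ^ 2 ∂μ := by
  simpa [ENNReal.rpow_two] using
    eLpNorm_nnreal_pow_eq_lintegral (f := F) (μ := μ) (p := 2) two_ne_zero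

theorem sqrt_integral_norm_sq_le_toReal_eLpNorm {E : Type*} [NormedAddCommGroup E] (F : α → E) :
    √(∫ x, ‖F x‖ ^ 2 ∂μ) ≤ (eLpNorm F 2 μ).toReal := by
  have h : ∫ x, ‖F x‖ ^ 2 ∂μ ≤ (eLpNorm F 2 μ).toReal ^ 2 := by
    refine (Real.le_norm_self _).trans ((norm_integral_le_lintegral_norm _).trans_eq ?_)
    simp only [← ENNReal.toReal_pow, eLpNorm_two_sq_eq_lintegral, norm_pow, norm_norm]
    congr 1
    refine lintegral_congr fun x => ?_
    rw [ENNReal.ofReal_pow (norm_nonneg _), ofReal_norm]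
  calc √(∫ x, ‖F x‖ ^ 2 ∂μ) ≤ √((eLpNorm F 2 μ).toReal ^ 2) := Real.sqrt_le_sqrt h
    _ = (eLpNorm F 2 μ).toReal := Real.sqrt_sq ENNReal.toReal_nonneg

theorem MeasureTheory.MemLp.eLpNorm_two_eq {E : Type*} [NormedAddCommGroup E] {F : α → E}
    (hF : MemLp F 2 μ) :
    eLpNorm F 2 μ = ENNReal.ofReal √(∫ x, ‖F x‖ ^ 2 ∂μ) := by
  rw [hF.eLpNorm_eq_integral_rpow_norm two_ne_zero ENNReal.ofNat_ne_top]
  simp [Real.sqrt_eq_rpow]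

theorem MeasureTheory.MemLp.dist_smul {X E : Type*} [PseudoMetricSpace X] [MeasurableSpace X]
    [OpensMeasurableSpace X] {μ : Measure X} [NormedAddCommGroup E] [NormedSpace ℝ E]
    {f : X → E} {c : X} {δ : ℝ} {p : ℝ≥0∞} (hf : MemLp f p μ)
    (hsupp : ∀ x, δ ≤ dist x c → f x = 0) : MemLp (fun x => dist x c • f x) p μ := by
  refine hf.of_le_mul (c := δ)
    ((continuous_id.dist continuous_const).aestronglyMeasurable.smul hf.1) (ae_of_all _ fun x => ?_)
  rw [norm_smul, Real.norm_of_nonneg dist_nonneg]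
  by_cases hx : δ ≤ dist x c
  · simp [hsupp x hx]
  · exact mul_le_mul_of_nonneg_right (not_le.mp hx).le (norm_nonneg _)

theorem eLpNorm_dist_smul_le {X E : Type*} [PseudoMetricSpace X] [MeasurableSpace X]
    [OpensMeasurableSpace X] {μ : Measure X} [NormedAddCommGroup E] [NormedSpace ℝ E]
    {f : X → E} {c : X} {δ M : ℝ} (hf : MemLp f 2 μ) (hsupp : ∀ x, δ ≤ dist x c → f x = 0)
    (hM : √(∫ x, dist x c ^ 2 * ‖f x‖ ^ 2 ∂μ) ≤ M) :
    eLpNorm (fun x => dist x c • f x) 2 μ ≤ ENNReal.ofReal M := by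
  rw [(hf.dist_smul hsupp).eLpNorm_two_eq]
  refine ENNReal.ofReal_le_ofReal (le_of_eq_of_le ?_ hM)
  simp_rw [norm_smul, mul_pow, Real.norm_of_nonneg dist_nonneg]

theorem MeasureTheory.Integrable.eLpNorm_one_le {E : Type*} [NormedAddCommGroup E] {f : α → E}
    (hf : Integrable f μ) {N : ℝ} (hN : ∫ x, ‖f x‖ ∂μ ≤ N) : eLpNorm f 1 μ ≤ ENNReal.ofReal N := by
  rw [eLpNorm_one_eq_lintegral_enorm, ← ofReal_integral_norm_eq_lintegral_enorm hf]
  exact ENNReal.ofReal_le_ofReal hN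

end Integral

section Convolution

variable {G : Type*} [MeasurableSpace G] [AddCommGroup G] [MeasurableAdd₂ G] [MeasurableNeg G]
  {μ : Measure G}

theorem measurable_lintegral_conv [SFinite μ] {u w : G → ℝ≥0∞} (hu : Measurable u)
    (hw : Measurable w) : Measurable fun k => ∫⁻ s, u (k - s) * w s ∂μ :=
  ((hu.comp measurable_sub).mul (hw.comp measurable_snd)).lintegral_prod_right'

variable [μ.IsAddLeftInvariant]

theorem lintegral_conv_comm [μ.IsNegInvariant] (u w : G → ℝ≥0∞) (k : G) :
    ∫⁻ s, u (k - s) * w s ∂μ = ∫⁻ s, w (k - s) * u s ∂μ := by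
  rw [← lintegral_sub_left_eq_self (fun s => w (k - s) * u s) k]
  simp only [sub_sub_cancel, mul_comm]

theorem lintegral_sq_conv_le [SFinite μ] {u w : G → ℝ≥0∞} (hu : Measurable u)
    (hw : Measurable w) :
    ∫⁻ k, (∫⁻ s, u (k - s) * w s ∂μ) ^ 2 ∂μ ≤ (∫⁻ t, u t ^ 2 ∂μ) * (∫⁻ s, w s ∂μ) ^ 2 := by
  have huw : Measurable fun p : G × G => u (p.1 - p.2) ^ 2 * w p.2 :=
    ((hu.comp measurable_sub).pow_const 2).mul (hw.comp measurable_snd)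
  have hinner : ∀ s, ∫⁻ k, u (k - s) ^ 2 * w s ∂μ = (∫⁻ t, u t ^ 2 ∂μ) * w s := fun s => by
    rw [lintegral_mul_const (f := fun k => u (k - s) ^ 2) _
        ((hu.comp (measurable_sub_const s)).pow_const 2),
      lintegral_sub_right_eq_self (fun t => u t ^ 2)]
  calc ∫⁻ k, (∫⁻ s, u (k - s) * w s ∂μ) ^ 2 ∂μ
      ≤ ∫⁻ k, (∫⁻ s, u (k - s) ^ 2 * w s ∂μ) * ∫⁻ s, w s ∂μ ∂μ :=
        lintegral_mono fun k => sq_lintegral_mul_le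
          (hu.comp (measurable_const_sub k)).aemeasurable hw.aemeasurable
    _ = (∫⁻ s, ∫⁻ k, u (k - s) ^ 2 * w s ∂μ ∂μ) * ∫⁻ s, w s ∂μ := by
        rw [lintegral_mul_const _ huw.lintegral_prod_right',
          lintegral_lintegral_swap huw.aemeasurable]
    _ = (∫⁻ t, u t ^ 2 ∂μ) * (∫⁻ s, w s ∂μ) ^ 2 := by
        simp_rw [hinner, lintegral_const_mul _ hw, sq, mul_assoc]

theorem eLpNorm_lintegral_conv_le [SFinite μ] {u w : G → ℝ≥0∞} (hu : Measurable u)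
    (hw : Measurable w) :
    eLpNorm (fun k => ∫⁻ s, u (k - s) * w s ∂μ) 2 μ ≤ eLpNorm u 2 μ * eLpNorm w 1 μ := by
  rw [← ENNReal.pow_le_pow_left_iff two_ne_zero, mul_pow, eLpNorm_two_sq_eq_lintegral,
    eLpNorm_two_sq_eq_lintegral, eLpNorm_one_eq_lintegral_enorm]
  simpa only [enorm_eq_self] using lintegral_sq_conv_le hu hw

theorem eLpNorm_lintegral_conv_le' [SFinite μ] [μ.IsNegInvariant] {u w : G → ℝ≥0∞}
    (hu : Measurable u) (hw : Measurable w) :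
    eLpNorm (fun k => ∫⁻ s, u (k - s) * w s ∂μ) 2 μ ≤ eLpNorm w 2 μ * eLpNorm u 1 μ := by
  simp_rw [lintegral_conv_comm u w]
  exact eLpNorm_lintegral_conv_le hw hu

end Convolution

section Multiplier

variable {G : Type*} [NormedAddCommGroup G] {a b : G} {δ L : ℝ} {f g m : G → ℂ}

theorem mul_conv_integrand_eq_zero (hf : ∀ x, δ ≤ dist x a → f x = 0)
    (hg : ∀ x, δ ≤ dist x b → g x = 0) {k : G} (hk : 2 * δ ≤ dist k (a + b)) (s : G) :
    f (k - s) * g s = 0 := by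
  by_contra h
  obtain ⟨hfs, hgs⟩ := mul_ne_zero_iff.mp h
  have h1 : dist (k - s) a < δ := not_le.mp (mt (hf _) hfs)
  have h2 : dist s b < δ := not_le.mp (mt (hg _) hgs)
  have := dist_add_add_le (k - s) s a b
  rw [sub_add_cancel] at this
  linarith

variable [MeasurableSpace G] {μ : Measure G}

theorem enorm_multiplier_sub_mul_conv_le
    (hm : ∀ k ∈ Metric.ball (a + b) (2 * δ), ‖m k - m (a + b)‖ ≤ L * dist k (a + b))
    (hf : ∀ x, δ ≤ dist x a → f x = 0) (hg : ∀ x, δ ≤ dist x b → g x = 0) (k : G) :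
    ‖(m k - m (a + b)) * ∫ s, f (k - s) * g s ∂μ‖ₑ ≤
      ENNReal.ofReal L * ∫⁻ s, (edist (k - s) a + edist s b) * (‖f (k - s)‖ₑ * ‖g s‖ₑ) ∂μ := by
  by_cases hk : k ∈ Metric.ball (a + b) (2 * δ)
  · have hmk : ‖m k - m (a + b)‖ₑ ≤ ENNReal.ofReal L * edist k (a + b) := by
      rw [edist_dist, ← ENNReal.ofReal_mul' dist_nonneg, ← ofReal_norm]
      exact ENNReal.ofReal_le_ofReal (hm k hk)
    calc ‖(m k - m (a + b)) * ∫ s, f (k - s) * g s ∂μ‖ₑ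
        ≤ ENNReal.ofReal L * edist k (a + b) * ∫⁻ s, ‖f (k - s)‖ₑ * ‖g s‖ₑ ∂μ := by
          rw [enorm_mul]
          gcongr
          exact (enorm_integral_le_lintegral_enorm _).trans_eq (by simp only [enorm_mul])
      _ = ENNReal.ofReal L * ∫⁻ s, edist k (a + b) * (‖f (k - s)‖ₑ * ‖g s‖ₑ) ∂μ := by
          rw [lintegral_const_mul' _ _ (edist_ne_top _ _), mul_assoc]
      _ ≤ _ := by
          gcongr with s
          simpa using edist_add_add_le (k - s) s a b
  · have hzero : ∫ s, f (k - s) * g s ∂μ = 0 := by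
      simp [mul_conv_integrand_eq_zero hf hg (not_lt.mp (Metric.mem_ball.not.mp hk))]
    simp [hzero]

variable [BorelSpace G] [SecondCountableTopology G] [SFinite μ] [μ.IsAddLeftInvariant]
  [μ.IsNegInvariant]

theorem eLpNorm_multiplier_sub_mul_conv_le (hfm : Measurable f) (hgm : Measurable g)
    (hm : ∀ k ∈ Metric.ball (a + b) (2 * δ), ‖m k - m (a + b)‖ ≤ L * dist k (a + b))
    (hf : ∀ x, δ ≤ dist x a → f x = 0) (hg : ∀ x, δ ≤ dist x b → g x = 0) :
    eLpNorm (fun k => (m k - m (a + b)) * ∫ s, f (k - s) * g s ∂μ) 2 μ ≤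
      ENNReal.ofReal L * (eLpNorm (fun x => dist x a • f x) 2 μ * eLpNorm g 1 μ +
        eLpNorm (fun x => dist x b • g x) 2 μ * eLpNorm f 1 μ) := by
  set u : G → ℝ≥0∞ := fun x => ‖f x‖ₑ
  set w : G → ℝ≥0∞ := fun x => ‖g x‖ₑ
  set U : G → ℝ≥0∞ := fun x => edist x a * u x
  set W : G → ℝ≥0∞ := fun x => edist x b * w x
  have hu : Measurable u := hfm.enorm
  have hw : Measurable w := hgm.enorm
  have hU : Measurable U := (measurable_id.edist measurable_const).mul hu
  have hW : Measurable W := (measurable_id.edist measurable_const).mul hw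
  have hweight (c : G) (h : G → ℂ) : eLpNorm (fun x => dist x c • h x) 2 μ =
      eLpNorm (fun x => edist x c * ‖h x‖ₑ) 2 μ :=
    eLpNorm_congr_enorm_ae (ae_of_all _ fun x => by
      simp only [enorm_smul, enorm_eq_self, Real.enorm_of_nonneg dist_nonneg, edist_dist])
  have hsplit (k : G) : ∫⁻ s, (edist (k - s) a + edist s b) * (u (k - s) * w s) ∂μ =
      (∫⁻ s, U (k - s) * w s ∂μ) + ∫⁻ s, u (k - s) * W s ∂μ := by
    rw [← lintegral_add_left (f := fun s => U (k - s) * w s)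
      ((hU.comp (measurable_const_sub k)).mul hw)]
    congr with s
    simp only [U, W]
    ring
  calc eLpNorm (fun k => (m k - m (a + b)) * ∫ s, f (k - s) * g s ∂μ) 2 μ
      ≤ L.toNNReal • eLpNorm ((fun k => ∫⁻ s, U (k - s) * w s ∂μ) +
          fun k => ∫⁻ s, u (k - s) * W s ∂μ) 2 μ :=
        eLpNorm_le_nnreal_smul_eLpNorm_of_ae_le_mul'
          (ae_of_all _ fun k => (enorm_multiplier_sub_mul_conv_le hm hf hg k).trans_eq
            (by rw [hsplit]; rfl)) 2
    _ ≤ ENNReal.ofReal L * (eLpNorm (fun k => ∫⁻ s, U (k - s) * w s ∂μ) 2 μ +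
          eLpNorm (fun k => ∫⁻ s, u (k - s) * W s ∂μ) 2 μ) := by
        rw [ENNReal.smul_def, smul_eq_mul]
        exact mul_le_mul_right (eLpNorm_add_le
          (measurable_lintegral_conv hU hw).aestronglyMeasurable
          (measurable_lintegral_conv hu hW).aestronglyMeasurable one_le_two) _
    _ ≤ ENNReal.ofReal L * (eLpNorm U 2 μ * eLpNorm w 1 μ + eLpNorm W 2 μ * eLpNorm u 1 μ) := by
        gcongr
        · exact eLpNorm_lintegral_conv_le hU hw
        · exact eLpNorm_lintegral_conv_le' hu hW
    _ = _ := by rw [hweight, hweight, eLpNorm_enorm, eLpNorm_enorm]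

end Multiplier

theorem multiplier_product_estimate_general (ω δ : ℝ)
    (m : ℝ × ℝ → ℂ) (L : ℝ)
    (hm : ∀ k ∈ Metric.ball ((2 * ω, 0) : ℝ × ℝ) (2 * δ),
      ‖m k - m ((2 * ω, 0) : ℝ × ℝ)‖ ≤ L * dist k ((2 * ω, 0) : ℝ × ℝ)) :
    ∃ C > 0, ∀ ε θ : ℝ, 0 < ε → ε ≤ 1 → 0 < θ → θ < 1 →
      ∀ ηhat vhat : ℝ × ℝ → ℂ, Measurable ηhat → Measurable vhat →
        Integrable ηhat → Integrable vhat →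
        MemLp ηhat 2 (volume : Measure (ℝ × ℝ)) →
        MemLp vhat 2 (volume : Measure (ℝ × ℝ)) →
        (∀ k : ℝ × ℝ, δ ≤ dist k ((ω, 0) : ℝ × ℝ) → ηhat k = 0) →
        (∀ k : ℝ × ℝ, δ ≤ dist k ((ω, 0) : ℝ × ℝ) → vhat k = 0) →
        ∀ Nη Nv : ℝ,
          Real.sqrt (∫ k : ℝ × ℝ, dist k ((ω, 0) : ℝ × ℝ) ^ 2 * ‖ηhat k‖ ^ 2) ≤ ε * Nη →
          (∫ k : ℝ × ℝ, ‖ηhat k‖) ≤ ε ^ θ * Nη →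
          Real.sqrt (∫ k : ℝ × ℝ, dist k ((ω, 0) : ℝ × ℝ) ^ 2 * ‖vhat k‖ ^ 2) ≤ ε * Nv →
          (∫ k : ℝ × ℝ, ‖vhat k‖) ≤ ε ^ θ * Nv →
          Real.sqrt (∫ k : ℝ × ℝ,
              ‖(m k - m ((2 * ω, 0) : ℝ × ℝ)) * (∫ s : ℝ × ℝ, ηhat (k - s) * vhat s)‖ ^ 2) ≤
            C * ε ^ (1 + θ) * Nη * Nv := by
  refine ⟨2 * max L 0 + 1, by positivity, ?_⟩
  intro ε θ hε _ _ _ ηhat vhat hηm hvm hηI hvI hη2 hv2 hηsupp hvsupp Nη Nv hηw hη1 hvw hv1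
  have hεθ : 0 < ε ^ θ := Real.rpow_pos_of_pos hε θ
  have hNη : 0 ≤ Nη :=
    nonneg_of_mul_nonneg_right ((integral_nonneg fun _ => norm_nonneg _).trans hη1) hεθ
  have hNv : 0 ≤ Nv :=
    nonneg_of_mul_nonneg_right ((integral_nonneg fun _ => norm_nonneg _).trans hv1) hεθ
  have hc : ((2 * ω, 0) : ℝ × ℝ) = (ω, 0) + (ω, 0) := by simp [two_mul]
  rw [hc] at hm ⊢
  have hbound := (eLpNorm_multiplier_sub_mul_conv_le hηm hvm hm hηsupp hvsupp).trans <|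
    mul_le_mul_right (add_le_add
      (mul_le_mul' (eLpNorm_dist_smul_le hη2 hηsupp hηw) (hvI.eLpNorm_one_le hv1))
      (mul_le_mul' (eLpNorm_dist_smul_le hv2 hvsupp hvw) (hηI.eLpNorm_one_le hη1))) _
  rw [← ENNReal.ofReal_mul (by positivity), ← ENNReal.ofReal_mul (by positivity),
    ← ENNReal.ofReal_add (by positivity) (by positivity)] at hbound
  calc _ ≤ _ := sqrt_integral_norm_sq_le_toReal_eLpNorm _
    _ ≤ _ := ENNReal.toReal_mono (by finiteness) hbound
    _ = 2 * max L 0 * (ε ^ (1 + θ) * Nη * Nv) := by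
        rw [ENNReal.toReal_mul, ENNReal.toReal_ofReal', ENNReal.toReal_ofReal (by positivity),
          Real.rpow_add hε, Real.rpow_one]
        ring
    _ ≤ (2 * max L 0 + 1) * (ε ^ (1 + θ) * Nη * Nv) := by gcongr; linarith
    _ = (2 * max L 0 + 1) * ε ^ (1 + θ) * Nη * Nv := by ring

/-- Fourier multiplier operators acting on products of functions whose
Fourier transforms are concentrated near `(ω,0)` may be approximated by the constant
`m(2ω,0)`, with error `O(ε^{1+θ})`.  Everything is phrased on the Fourier side: the
Fourier transform of the product `ηv` is the convolution `η̂ * v̂`, and by Plancherel the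
`L²` norm of `m(D)(ηv) − m(2ω,0)ηv` equals the `L²` norm of `(m − m(2ω,0))(η̂ * v̂)`. -/
theorem multiplier_product_estimate (ω δ : ℝ) (hω : 0 < ω) (hδ0 : 0 < δ) (hδ : δ < ω)
    (m : ℝ × ℝ → ℂ) (L : ℝ)
    (hm : ∀ k ∈ Metric.ball ((2 * ω, 0) : ℝ × ℝ) (2 * δ),
      ‖m k - m ((2 * ω, 0) : ℝ × ℝ)‖ ≤ L * dist k ((2 * ω, 0) : ℝ × ℝ)) :
    ∃ C > 0, ∀ ε θ : ℝ, 0 < ε → ε ≤ 1 → 0 < θ → θ < 1 →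
      ∀ ηhat vhat : ℝ × ℝ → ℂ, Measurable ηhat → Measurable vhat →
        Integrable ηhat → Integrable vhat →
        MemLp ηhat 2 (volume : Measure (ℝ × ℝ)) →
        MemLp vhat 2 (volume : Measure (ℝ × ℝ)) →
        (∀ k : ℝ × ℝ, δ ≤ dist k ((ω, 0) : ℝ × ℝ) → ηhat k = 0) →
        (∀ k : ℝ × ℝ, δ ≤ dist k ((ω, 0) : ℝ × ℝ) → vhat k = 0) →
        ∀ Nη Nv : ℝ,
          Real.sqrt (∫ k : ℝ × ℝ, dist k ((ω, 0) : ℝ × ℝ) ^ 2 * ‖ηhat k‖ ^ 2) ≤ ε * Nη →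
          (∫ k : ℝ × ℝ, ‖ηhat k‖) ≤ ε ^ θ * Nη →
          Real.sqrt (∫ k : ℝ × ℝ, dist k ((ω, 0) : ℝ × ℝ) ^ 2 * ‖vhat k‖ ^ 2) ≤ ε * Nv →
          (∫ k : ℝ × ℝ, ‖vhat k‖) ≤ ε ^ θ * Nv →
          Real.sqrt (∫ k : ℝ × ℝ,
              ‖(m k - m ((2 * ω, 0) : ℝ × ℝ)) * (∫ s : ℝ × ℝ, ηhat (k - s) * vhat s)‖ ^ 2) ≤
            C * ε ^ (1 + θ) * Nη * Nv :=
  multiplier_product_estimate_general ω δ m L hm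
end

section
/- Let H be a Hilbert space, s ∈ ℕ, and let {x_n} ⊂ ℓ²(ℤˢ, H) be a bounded sequence such that the set S = {x_{n,j} : n ∈ ℕ, j ∈ ℤˢ} is relatively compact in H and limsup_{n→∞} ‖x_n‖_{ℓ^∞(ℤˢ,H)} > 0. Then there is a subsequence, a sequence {w_n} ⊂ ℤˢ, and a nonzero x¹ ∈ ℓ²(ℤˢ,H) such that T_{−w_n}x_n ⇀ x¹ weakly in ℓ²(ℤˢ,H), ‖x¹‖_{ℓ^∞} = lim_n ‖x_n‖_{ℓ^∞} > 0, and lim_n ‖x_n‖²_{ℓ²} = ‖x¹‖²_{ℓ²} + lim_n ‖x_n − T_{w_n}x¹‖²_{ℓ²}. -/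
/-!
Choose `w n` with `‖x n (w n)‖ = ‖x n‖_∞`; the supremum is attained because the components of an
`ℓ²` sequence tend to `0`. Pass to a subsequence along which `‖x n‖_∞` tends to its `limsup`.
The components of the translates `T_{-w n} x n` lie in a fixed compact set, so by Tychonoff a
further subsequence converges componentwise to some `x¹`, which is in `ℓ²` by lower
semicontinuity of the norm. A bounded sequence in `ℓ²` converging componentwise converges weakly,
since finitely supported vectors are dense. The component `x¹ 0` is the limit of the maximal
components, hence `‖x¹‖_∞ = ‖x¹ 0‖ = limsup ‖x n‖_∞ > 0`, and expanding `‖T_{-w n} x n - x¹‖²`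
gives the splitting of the norms.
-/

open Filter Topology
open scoped ENNReal RealInnerProductSpace translate

theorem ciSup_eq_of_forall_le_apply {ι α : Type*} [ConditionallyCompleteLattice α] {f : ι → α}
    {i₀ : ι} (h : ∀ i, f i ≤ f i₀) : ⨆ i, f i = f i₀ :=
  IsGreatest.csSup_eq ⟨⟨i₀, rfl⟩, Set.forall_mem_range.2 h⟩

theorem Filter.Tendsto.exists_forall_ge_of_nonneg {α : Type*} [Nonempty α] {g : α → ℝ}
    (hg : Tendsto g cofinite (𝓝 0)) (hg₀ : ∀ a, 0 ≤ g a) : ∃ a₀, ∀ a, g a ≤ g a₀ := by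
  by_cases hpos : ∃ a₁, 0 < g a₁
  · obtain ⟨a₁, ha₁⟩ := hpos
    obtain ⟨a₀, -, ha₀⟩ := Set.exists_max_image {a | g a₁ ≤ g a} g
      (by simpa using hg.eventually_lt_const ha₁) ⟨a₁, le_refl (g a₁)⟩
    refine ⟨a₀, fun a => ?_⟩
    rcases le_or_gt (g a₁) (g a) with h | h
    · exact ha₀ a h
    · exact h.le.trans (ha₀ a₁ (le_refl (g a₁)))
  · push Not at hpos
    exact ⟨Classical.arbitrary α, fun a => (hpos a).trans (hg₀ _)⟩

theorem exists_strictMono_tendsto_limsup {α : Type*} [ConditionallyCompleteLinearOrder α]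
    [TopologicalSpace α] [OrderTopology α] [FirstCountableTopology α] {u : ℕ → α} {a b : α}
    (ha : ∀ n, a ≤ u n) (hb : ∀ n, u n ≤ b) :
    ∃ φ : ℕ → ℕ, StrictMono φ ∧ Tendsto (u ∘ φ) atTop (𝓝 (limsup u atTop)) :=
  (MapClusterPt.limsup (isCoboundedUnder_le_of_le atTop ha)
    (isBoundedUnder_of ⟨b, hb⟩)).tendsto_subseq

theorem tendsto_norm_sub_sq_of_tendsto_inner {α F : Type*} [NormedAddCommGroup F]
    [InnerProductSpace ℝ F] {l : Filter α} {u : α → F} {v : F} {L : ℝ}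
    (hu : Tendsto (fun n => ‖u n‖ ^ 2) l (𝓝 L))
    (huv : Tendsto (fun n => ⟪u n, v⟫) l (𝓝 (‖v‖ ^ 2))) :
    Tendsto (fun n => ‖u n - v‖ ^ 2) l (𝓝 (L - ‖v‖ ^ 2)) := by
  simp only [norm_sub_sq_real]
  convert (hu.sub (huv.const_mul 2)).add_const (‖v‖ ^ 2) using 2
  ring

section Translate

variable {α β E : Type*} [NormedAddCommGroup E] {p : ℝ≥0∞}

theorem Memℓp.comp_equiv {f : β → E} (hf : Memℓp f p) (e : α ≃ β) : Memℓp (f ∘ e) p := by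
  rcases p.trichotomy with rfl | rfl | hp
  · rw [memℓp_zero_iff] at hf ⊢
    exact hf.preimage e.injective.injOn
  · rw [memℓp_infty_iff] at hf ⊢
    exact hf.mono (Set.range_comp_subset_range e fun b => ‖f b‖)
  · rw [memℓp_gen_iff hp] at hf ⊢
    exact hf.comp_injective e.injective

theorem lp.exists_forall_norm_apply_le [Nonempty α] (hp : 0 < p.toReal)
    (f : lp (fun _ : α => E) p) : ∃ a₀, ∀ a, ‖f a‖ ≤ ‖f a₀‖ := by
  obtain ⟨a₀, ha₀⟩ := ((memℓp_gen_iff hp).1 (lp.memℓp f)).tendsto_cofinite_zero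
    |>.exists_forall_ge_of_nonneg fun a => by positivity
  exact ⟨a₀, fun a => (Real.rpow_le_rpow_iff (norm_nonneg _) (norm_nonneg _) hp).1 (ha₀ a)⟩

theorem lp.norm_sq_eq_tsum (f : lp (fun _ : α => E) 2) : ‖f‖ ^ 2 = ∑' a, ‖f a‖ ^ 2 := by
  simpa using lp.norm_rpow_eq_tsum (p := 2) (by norm_num) f

variable [AddCommGroup α]

noncomputable def lp.translate (w : α) (f : lp (fun _ : α => E) p) : lp (fun _ : α => E) p :=
  ⟨τ w f, (lp.memℓp f).comp_equiv (Equiv.subRight w)⟩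

@[simp]
theorem lp.translate_apply (w : α) (f : lp (fun _ : α => E) p) (a : α) :
    lp.translate w f a = f (a - w) :=
  rfl

theorem lp.norm_translate (hp : 0 < p.toReal) (w : α) (f : lp (fun _ : α => E) p) :
    ‖lp.translate w f‖ = ‖f‖ := by
  refine Real.rpow_left_injOn hp.ne' (lp.norm_nonneg' (lp.translate w f)) (lp.norm_nonneg' f) ?_
  simp only [lp.norm_rpow_eq_tsum hp, lp.translate_apply]
  exact (Equiv.subRight w).tsum_eq fun a => ‖f a‖ ^ p.toReal

theorem lp.norm_sub_translate (hp : 0 < p.toReal) (w : α) (f g : lp (fun _ : α => E) p) :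
    ‖f - lp.translate w g‖ = ‖lp.translate (-w) f - g‖ := by
  rw [← lp.norm_translate hp (-w)]
  congr 1
  ext a
  simp only [lp.coeFn_sub, Pi.sub_apply, lp.translate_apply, sub_neg_eq_add, add_sub_cancel_right]

end Translate

theorem lp.tendsto_inner_of_tendsto_apply {ι α 𝕜 : Type*} [RCLike 𝕜] {G : ι → Type*}
    [∀ i, NormedAddCommGroup (G i)] [∀ i, InnerProductSpace 𝕜 (G i)] {l : Filter α}
    {F : α → lp G 2} {f : lp G 2} {C : ℝ} (hC : ∀ n, ‖F n‖ ≤ C)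
    (hF : ∀ i, Tendsto (fun n => F n i) l (𝓝 (f i))) (y : lp G 2) :
    Tendsto (fun n => inner 𝕜 (F n) y) l (𝓝 (inner 𝕜 f y)) := by
  classical
  have hequi : Equicontinuous fun n y => inner 𝕜 (F n) y := by
    have hbdd : ∃ C, ∀ n, ‖innerSL 𝕜 (F n)‖ ≤ C :=
      ⟨C, fun n => (innerSL_apply_norm 𝕜 (F n)).trans_le (hC n)⟩
    exact ((NormedSpace.equicontinuous_TFAE fun n => innerSL 𝕜 (F n)).out 5 1).1 hbdd
  -- The set of `y` for which the claim holds is closed and contains the finitely supported vectors.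
  have hclosed := hequi.isClosed_setOfPred_tendsto (l := l) (f := fun y => inner 𝕜 f y)
    (continuous_const.inner continuous_id)
  refine hclosed.mem_of_tendsto (lp.hasSum_single (by norm_num) y)
    (Eventually.of_forall fun s => ?_)
  simp only [Set.mem_ofPred_eq, inner_sum, lp.inner_single_right]
  exact tendsto_finsetSum s fun i _ => (hF i).inner tendsto_const_nhds

section Profile

variable {ι H : Type*} [Countable ι] [NormedAddCommGroup H] {F : ℕ → lp (fun _ : ι => H) 2}
  {M : ℝ} {K : Set H}

theorem lp.exists_subseq_tendsto_apply_of_isCompact (hM : ∀ n, ‖F n‖ ≤ M) (hK : IsCompact K)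
    (hFK : ∀ n i, F n i ∈ K) :
    ∃ φ : ℕ → ℕ, StrictMono φ ∧ ∃ (f : lp (fun _ : ι => H) 2) (L : ℝ),
      (∀ i, Tendsto (fun n => F (φ n) i) atTop (𝓝 (f i))) ∧
        Tendsto (fun n => ‖F (φ n)‖ ^ 2) atTop (𝓝 L) := by
  obtain ⟨⟨L, f⟩, -, φ, hφ, hlim⟩ := ((isCompact_Icc (a := 0) (b := M ^ 2)).prod
    (isCompact_univ_pi fun _ : ι => hK)).tendsto_subseq
    (x := fun n => (‖F n‖ ^ 2, (F n : ι → H)))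
    fun n => ⟨⟨by positivity, pow_le_pow_left₀ (norm_nonneg _) (hM n) 2⟩, fun i _ => hFK n i⟩
  have hf : Tendsto (fun n => (F (φ n) : ι → H)) atTop (𝓝 f) := hlim.snd_nhds
  have hbdd : Bornology.IsBounded (Set.range fun n => F (φ n)) :=
    isBounded_iff_forall_norm_le.2 ⟨M, Set.forall_mem_range.2 fun n => hM (φ n)⟩
  exact ⟨φ, hφ, ⟨f, lp.memℓp_of_tendsto hbdd hf⟩, L, fun i => tendsto_pi_nhds.1 hf i,
    hlim.fst_nhds⟩

theorem lp.exists_subseq_weak_limit_of_isCompact [InnerProductSpace ℝ H] (hM : ∀ n, ‖F n‖ ≤ M)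
    (hK : IsCompact K) (hFK : ∀ n i, F n i ∈ K) :
    ∃ φ : ℕ → ℕ, StrictMono φ ∧ ∃ (f : lp (fun _ : ι => H) 2) (A : ℝ),
      (∀ i, Tendsto (fun n => F (φ n) i) atTop (𝓝 (f i))) ∧
      (∀ y, Tendsto (fun n => ⟪F (φ n), y⟫) atTop (𝓝 ⟪f, y⟫)) ∧
      Tendsto (fun n => ‖F (φ n)‖ ^ 2) atTop (𝓝 (‖f‖ ^ 2 + A)) ∧
      Tendsto (fun n => ‖F (φ n) - f‖ ^ 2) atTop (𝓝 A) := by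
  obtain ⟨φ, hφ, f, L, hpt, hL⟩ := lp.exists_subseq_tendsto_apply_of_isCompact hM hK hFK
  have hweak : ∀ y, Tendsto (fun n => ⟪F (φ n), y⟫) atTop (𝓝 ⟪f, y⟫) :=
    lp.tendsto_inner_of_tendsto_apply (fun n => hM (φ n)) hpt
  refine ⟨φ, hφ, f, L - ‖f‖ ^ 2, hpt, hweak, by rwa [add_sub_cancel], ?_⟩
  exact tendsto_norm_sub_sq_of_tendsto_inner hL (by simpa using hweak f)

end Profile

theorem concentration_first_profile_general {H : Type*} [NormedAddCommGroup H]
    [InnerProductSpace ℝ H] (s : ℕ)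
    (x : ℕ → lp (fun _ : Fin s → ℤ => H) 2)
    (hbdd : ∃ M : ℝ, ∀ n, ‖x n‖ ≤ M)
    (hcpt : IsCompact (closure {h : H | ∃ n j, x n j = h}))
    (hnv : 0 < Filter.limsup (fun n => ⨆ j, ‖x n j‖) atTop) :
    ∃ φ : ℕ → ℕ, StrictMono φ ∧
      ∃ (w : ℕ → Fin s → ℤ) (x1 : lp (fun _ : Fin s → ℤ => H) 2),
        x1 ≠ 0 ∧
        (∀ y : lp (fun _ : Fin s → ℤ => H) 2,
          Tendsto (fun n => ∑' j, (inner ℝ (x (φ n) (j + w n)) (y j) : ℝ)) atTop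
            (nhds (∑' j, (inner ℝ (x1 j) (y j) : ℝ)))) ∧
        Tendsto (fun n => ⨆ j, ‖x (φ n) j‖) atTop (nhds (⨆ j, ‖x1 j‖)) ∧
        0 < ⨆ j, ‖x1 j‖ ∧
        ∃ A : ℝ,
          Tendsto (fun n => ‖x (φ n)‖ ^ 2) atTop (nhds (‖x1‖ ^ 2 + A)) ∧
          Tendsto (fun n => ∑' j, ‖x (φ n) j - x1 (j - w n)‖ ^ 2) atTop (nhds A) := by
  obtain ⟨M, hM⟩ := hbdd
  choose w hw using fun n => lp.exists_forall_norm_apply_le (p := 2) (by norm_num) (x n)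
  have hsup : ∀ n, ⨆ j, ‖x n j‖ = ‖x n (w n)‖ := fun n => ciSup_eq_of_forall_le_apply (hw n)
  obtain ⟨ψ, hψ, hlimsup⟩ := exists_strictMono_tendsto_limsup
    (fun n => (hsup n).symm ▸ norm_nonneg _)
    (fun n => (hsup n).trans_le ((lp.norm_apply_le_norm two_ne_zero _ _).trans (hM n)))
  set F := fun n => lp.translate (-w (ψ n)) (x (ψ n))
  obtain ⟨φ, hφ, x1, A, hpt, hweak, hnorm, hsplit⟩ := lp.exists_subseq_weak_limit_of_isCompact
    (F := F) (fun n => (lp.norm_translate (by norm_num) _ _).trans_le (hM _)) hcpt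
    (fun n j => subset_closure ⟨ψ n, _, rfl⟩)
  have hmax : Tendsto (fun n => ⨆ j, ‖x (ψ (φ n)) j‖) atTop (𝓝 ‖x1 0‖) := by
    simpa [F, hsup] using (hpt 0).norm
  have hx1sup : ⨆ j, ‖x1 j‖ = ‖x1 0‖ := ciSup_eq_of_forall_le_apply fun j =>
    le_of_tendsto_of_tendsto' (hpt j).norm (hpt 0).norm fun n => by simpa [F] using hw _ _
  have hpos : 0 < ‖x1 0‖ := tendsto_nhds_unique (hlimsup.comp hφ.tendsto_atTop) hmax ▸ hnv
  refine ⟨ψ ∘ φ, hψ.comp hφ, w ∘ ψ ∘ φ, x1, ?_, fun y => ?_, hx1sup ▸ hmax, hx1sup ▸ hpos, A,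
    by simpa [F, lp.norm_translate] using hnorm, hsplit.congr fun n => ?_⟩
  · rintro rfl
    simp at hpos
  · simpa [lp.inner_eq_tsum, F] using hweak y
  · rw [← lp.norm_sub_translate (by norm_num), lp.norm_sq_eq_tsum]
    simp

/-- (First step of the abstract concentration-compactness lemma.)  A
bounded sequence in `ℓ²(ℤˢ,H)` whose components form a relatively compact subset of `H` and
which does not vanish in `ℓ^∞` admits, after passing to a subsequence, translations
`T_{−w_n}x_n` converging weakly to a nonzero profile `x¹` whose `ℓ^∞` norm is the limit of
the `ℓ^∞` norms, together with the `ℓ²` norm splitting. -/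
theorem concentration_first_profile {H : Type*} [NormedAddCommGroup H]
    [InnerProductSpace ℝ H] [CompleteSpace H] (s : ℕ)
    (x : ℕ → lp (fun _ : Fin s → ℤ => H) 2)
    (hbdd : ∃ M : ℝ, ∀ n, ‖x n‖ ≤ M)
    (hcpt : IsCompact (closure {h : H | ∃ n j, x n j = h}))
    (hnv : 0 < Filter.limsup (fun n => ⨆ j, ‖x n j‖) atTop) :
    ∃ φ : ℕ → ℕ, StrictMono φ ∧
      ∃ (w : ℕ → Fin s → ℤ) (x1 : lp (fun _ : Fin s → ℤ => H) 2),
        x1 ≠ 0 ∧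
        (∀ y : lp (fun _ : Fin s → ℤ => H) 2,
          Tendsto (fun n => ∑' j, (inner ℝ (x (φ n) (j + w n)) (y j) : ℝ)) atTop
            (nhds (∑' j, (inner ℝ (x1 j) (y j) : ℝ)))) ∧
        Tendsto (fun n => ⨆ j, ‖x (φ n) j‖) atTop (nhds (⨆ j, ‖x1 j‖)) ∧
        0 < ⨆ j, ‖x1 j‖ ∧
        ∃ A : ℝ,
          Tendsto (fun n => ‖x (φ n)‖ ^ 2) atTop (nhds (‖x1‖ ^ 2 + A)) ∧
          Tendsto (fun n => ∑' j, ‖x (φ n) j - x1 (j - w n)‖ ^ 2) atTop (nhds A) :=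
  concentration_first_profile_general s x hbdd hcpt hnv
end

section
/- Let U be an open subset of a Banach space X, T : U → ℝ a C¹ functional, and G(ζ) = dT[ζ](ζ) with N = {ζ ∈ U : ζ ≠ 0, G(ζ) = 0}. Suppose ζ* ∈ N minimises T over N, T and G are C¹ near ζ*, and dG[ζ*](ζ*) = d²T[ζ*](ζ*,ζ*) ≠ 0. Then dT[ζ*] = 0, i.e. every ground state is a critical point of T. -/
/-!
Near `ζ*` the set `N` coincides with the level set `{G = G(ζ*)}`, so `ζ*` is a local minimiser
of `T` on that level set and the Lagrange multiplier rule gives `a • dG[ζ*] + b • dT[ζ*] = 0`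
with `(a, b) ≠ 0`. Testing against `ζ*` kills the second term, since `dT[ζ*](ζ*) = G(ζ*) = 0`,
so `a • dG[ζ*](ζ*) = 0` forces `a = 0`; hence `b ≠ 0` and `dT[ζ*] = 0`.
-/

open Topology

theorem IsMinOn.isLocalMinOn_of_mem_nhds {α β : Type*} [TopologicalSpace α] [Preorder β]
    {f : α → β} {s t : Set α} {a : α} (hf : IsMinOn f (s ∩ t) a) (ht : t ∈ 𝓝 a) :
    IsLocalMinOn f s a := by
  rw [IsLocalMinOn, nhdsWithin_restrict' s ht]
  exact hf.localize

theorem IsLocalExtrOn.eq_zero_of_hasStrictFDerivAt_of_apply_eq_zero {E : Type*}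
    [NormedAddCommGroup E] [NormedSpace ℝ E] [CompleteSpace E] {φ g : E → ℝ}
    {φ' g' : StrongDual ℝ E} {x₀ v : E} (hextr : IsLocalExtrOn φ {x | g x = g x₀} x₀)
    (hg : HasStrictFDerivAt g g' x₀) (hφ : HasStrictFDerivAt φ φ' x₀)
    (hφv : φ' v = 0) (hgv : g' v ≠ 0) : φ' = 0 := by
  obtain ⟨a, b, hab, hmult⟩ := hextr.exists_multipliers_of_hasStrictFDerivAt_1d hg hφ
  have ha : a = 0 := by
    have hv : a * g' v + b * φ' v = 0 := by simpa using congrArg (· v) hmult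
    rw [hφv, mul_zero, add_zero] at hv
    exact (mul_eq_zero.1 hv).resolve_right hgv
  have hb : b ≠ 0 := fun hb => hab (by simp [ha, hb])
  rw [ha, zero_smul, zero_add] at hmult
  exact (smul_eq_zero.1 hmult).resolve_left hb

theorem ground_state_is_critical_point_general {X : Type*} [NormedAddCommGroup X]
    [NormedSpace ℝ X] [CompleteSpace X]
    (U : Set X) (hU : IsOpen U) (T : X → ℝ) (DT : X → (X →L[ℝ] ℝ))
    (DG : X →L[ℝ] ℝ) (ζs : X) (hζU : ζs ∈ U) (hζne : ζs ≠ 0)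
    (hζN : DT ζs ζs = 0)
    (hTder : HasStrictFDerivAt T (DT ζs) ζs)
    (hGder : HasStrictFDerivAt (fun ζ : X => DT ζ ζ) DG ζs)
    (hmin : ∀ ζ ∈ U, ζ ≠ 0 → DT ζ ζ = 0 → T ζs ≤ T ζ)
    (hDG : DG ζs ≠ 0) :
    DT ζs = 0 := by
  have hminN : IsMinOn T ({ζ | DT ζ ζ = DT ζs ζs} ∩ (U ∩ {0}ᶜ)) ζs :=
    fun ζ ⟨hGζ, hζ, hζ0⟩ => hmin ζ hζ hζ0 (hGζ.trans hζN)
  have hloc : IsLocalMinOn T {ζ | DT ζ ζ = DT ζs ζs} ζs :=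
    hminN.isLocalMinOn_of_mem_nhds ((hU.inter isOpen_compl_singleton).mem_nhds ⟨hζU, hζne⟩)
  exact IsLocalExtrOn.eq_zero_of_hasStrictFDerivAt_of_apply_eq_zero (.inl hloc) hGder hTder hζN hDG

/-- (Remark `ground states`.)  Every ground state, i.e. every minimiser
`ζ*` of `T` over the natural constraint set `N = {ζ ∈ U : ζ ≠ 0, dT[ζ](ζ) = 0}` at which
`dG[ζ*](ζ*) = d²T[ζ*](ζ*,ζ*) ≠ 0`, is a critical point of `T`. -/
theorem ground_state_is_critical_point {X : Type*} [NormedAddCommGroup X]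
    [NormedSpace ℝ X] [CompleteSpace X]
    (U : Set X) (hU : IsOpen U) (T : X → ℝ) (DT : X → (X →L[ℝ] ℝ))
    (hT : ∀ ζ ∈ U, HasFDerivAt T (DT ζ) ζ)
    (DG : X →L[ℝ] ℝ) (ζs : X) (hζU : ζs ∈ U) (hζne : ζs ≠ 0)
    (hζN : DT ζs ζs = 0)
    (hTder : HasStrictFDerivAt T (DT ζs) ζs)
    (hGder : HasStrictFDerivAt (fun ζ : X => DT ζ ζ) DG ζs)
    (hmin : ∀ ζ ∈ U, ζ ≠ 0 → DT ζ ζ = 0 → T ζs ≤ T ζ)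
    (hDG : DG ζs ≠ 0) :
    DT ζs = 0 :=
  ground_state_is_critical_point_general U hU T DT DG ζs hζU hζne hζN hTder hGder hmin hDG
end

section
/- Let K₀ be the Fourier multiplier operator on ℝ² with symbol (k₁²/|k|²) f(|k|), where f(s) = s coth s. Then the map η ↦ (η² + β η_x² + β η_z²)_{L¹} − (1−ε²)Λ ⟨η, K₀η⟩_{L²}, i.e. the quadratic form B(η) = ∫_{ℝ²}(η² + βη_x² + βη_z²) dx dz − (1−ε²)Λ∫_{ℝ²} η K₀η dx dz, satisfies B(η) ≥ c ‖η‖_{H¹}² for some constant c > 0 independent of η ∈ H¹(ℝ²), for all sufficiently small ε > 0; hence B(·)^{1/2} defines a norm on H¹(ℝ²) equivalent to the usual one. -/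
/-!
Because `Λ` is the minimum of `(1 + β s²) / f(s)` and `0 ≤ k₁²/|k|² ≤ 1`, the subtracted term
`(1 - ε²) Λ (k₁²/|k|²) f(|k|)` is at most `(1 - ε²)(1 + β|k|²)`. Hence the symbol of the form
lies between `ε² (1 + β|k|²) ≥ ε² min(1, β) (1 + |k|²)` and `1 + β|k|² ≤ (1 + β)(1 + |k|²)`,
and integrating against `|η̂|²` gives both bounds.
-/

open MeasureTheory

lemma fcoth_nonneg {s : ℝ} (hs : 0 ≤ s) : 0 ≤ fcoth s := by
  unfold fcoth
  split_ifs with h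
  · exact zero_le_one
  · have hs' : 0 < s := lt_of_le_of_ne hs (Ne.symm h)
    have := Real.sinh_pos_iff.2 hs'
    have := Real.cosh_pos s
    positivity

@[fun_prop]
lemma measurable_fcoth : Measurable fcoth :=
  Measurable.ite (measurableSet_eq_fun measurable_id measurable_const) measurable_const
    (measurable_id.mul (Real.measurable_cosh.div Real.measurable_sinh))

/-- The Fourier symbol `(k₁²/|k|²) f(|k|)` of the operator `K₀`. -/
noncomputable def kernelSymbol (k : ℝ × ℝ) : ℝ :=
  k.1 ^ 2 / (k.1 ^ 2 + k.2 ^ 2) * fcoth (Real.sqrt (k.1 ^ 2 + k.2 ^ 2))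

/-- The Fourier symbol of the quadratic form `B`. -/
noncomputable def formSymbol (β Λ ε : ℝ) (k : ℝ × ℝ) : ℝ :=
  1 + β * (k.1 ^ 2 + k.2 ^ 2) -
    (1 - ε ^ 2) * Λ * (k.1 ^ 2 / (k.1 ^ 2 + k.2 ^ 2)) * fcoth (Real.sqrt (k.1 ^ 2 + k.2 ^ 2))

lemma formSymbol_eq (β Λ ε : ℝ) (k : ℝ × ℝ) :
    formSymbol β Λ ε k = 1 + β * (k.1 ^ 2 + k.2 ^ 2) - (1 - ε ^ 2) * (Λ * kernelSymbol k) := by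
  rw [formSymbol, kernelSymbol]
  ring

lemma kernelSymbol_nonneg (k : ℝ × ℝ) : 0 ≤ kernelSymbol k :=
  mul_nonneg (by positivity) (fcoth_nonneg (Real.sqrt_nonneg _))

lemma mul_kernelSymbol_le {β Λ : ℝ} (hΛ : 0 ≤ Λ)
    (hmin : ∀ s : ℝ, 0 ≤ s → Λ * fcoth s ≤ 1 + β * s ^ 2) (k : ℝ × ℝ) :
    Λ * kernelSymbol k ≤ 1 + β * (k.1 ^ 2 + k.2 ^ 2) := by
  have hq : 0 ≤ k.1 ^ 2 + k.2 ^ 2 := by positivity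
  have hratio : k.1 ^ 2 / (k.1 ^ 2 + k.2 ^ 2) ≤ 1 :=
    div_le_one_of_le₀ (le_add_of_nonneg_right (sq_nonneg _)) hq
  have hf := hmin (Real.sqrt (k.1 ^ 2 + k.2 ^ 2)) (Real.sqrt_nonneg _)
  rw [Real.sq_sqrt hq] at hf
  calc Λ * kernelSymbol k
      = k.1 ^ 2 / (k.1 ^ 2 + k.2 ^ 2) * (Λ * fcoth (Real.sqrt (k.1 ^ 2 + k.2 ^ 2))) := by
        rw [kernelSymbol]; ring
    _ ≤ 1 * (1 + β * (k.1 ^ 2 + k.2 ^ 2)) :=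
        mul_le_mul hratio hf (mul_nonneg hΛ (fcoth_nonneg (Real.sqrt_nonneg _))) zero_le_one
    _ = 1 + β * (k.1 ^ 2 + k.2 ^ 2) := one_mul _

lemma measurable_formSymbol (β Λ ε : ℝ) : Measurable (formSymbol β Λ ε) := by
  unfold formSymbol
  fun_prop

lemma sq_mul_le_formSymbol {β Λ ε : ℝ} (hΛ : 0 ≤ Λ) (hε : ε ^ 2 ≤ 1)
    (hmin : ∀ s : ℝ, 0 ≤ s → Λ * fcoth s ≤ 1 + β * s ^ 2) (k : ℝ × ℝ) :
    ε ^ 2 * (1 + β * (k.1 ^ 2 + k.2 ^ 2)) ≤ formSymbol β Λ ε k := by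
  rw [formSymbol_eq]
  nlinarith [mul_le_mul_of_nonneg_left (mul_kernelSymbol_le hΛ hmin k) (sub_nonneg.2 hε)]

lemma formSymbol_le {β Λ ε : ℝ} (hΛ : 0 ≤ Λ) (hε : ε ^ 2 ≤ 1) (k : ℝ × ℝ) :
    formSymbol β Λ ε k ≤ 1 + β * (k.1 ^ 2 + k.2 ^ 2) := by
  rw [formSymbol_eq]
  have := mul_nonneg (sub_nonneg.2 hε) (mul_nonneg hΛ (kernelSymbol_nonneg k))
  linarith

lemma min_one_mul_le {β q : ℝ} (hq : 0 ≤ q) : min 1 β * (1 + q) ≤ 1 + β * q := by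
  rw [mul_add, mul_one]
  exact add_le_add (min_le_left _ _) (mul_le_mul_of_nonneg_right (min_le_right _ _) hq)

lemma le_one_add_mul {β q : ℝ} (hβ : 0 ≤ β) (hq : 0 ≤ q) : 1 + β * q ≤ (1 + β) * (1 + q) := by
  nlinarith [mul_nonneg hβ hq]

section WeightedIntegral

variable {α : Type*} [MeasurableSpace α] {μ : Measure α} {v w g : α → ℝ}

lemma MeasureTheory.Integrable.mul_of_abs_le {C : ℝ} (hwg : Integrable (fun x => w x * g x) μ)
    (hvg : AEStronglyMeasurable (fun x => v x * g x) μ) (hg : ∀ x, 0 ≤ g x)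
    (hv : ∀ x, |v x| ≤ C * w x) : Integrable (fun x => v x * g x) μ := by
  refine (hwg.const_mul C).mono' hvg (ae_of_all _ fun x => ?_)
  rw [Real.norm_eq_abs, abs_mul, abs_of_nonneg (hg x), ← mul_assoc]
  exact mul_le_mul_of_nonneg_right (hv x) (hg x)

lemma const_mul_integral_le_integral_mul {c : ℝ} (hvg : Integrable (fun x => v x * g x) μ)
    (hwg : Integrable (fun x => w x * g x) μ) (hg : ∀ x, 0 ≤ g x) (h : ∀ x, c * v x ≤ w x) :
    c * ∫ x, v x * g x ∂μ ≤ ∫ x, w x * g x ∂μ := by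
  rw [← integral_const_mul]
  refine integral_mono (hvg.const_mul c) hwg fun x => ?_
  rw [← mul_assoc]
  exact mul_le_mul_of_nonneg_right (h x) (hg x)

lemma integral_mul_le_const_mul_integral {C : ℝ} (hvg : Integrable (fun x => v x * g x) μ)
    (hwg : Integrable (fun x => w x * g x) μ) (hg : ∀ x, 0 ≤ g x) (h : ∀ x, v x ≤ C * w x) :
    ∫ x, v x * g x ∂μ ≤ C * ∫ x, w x * g x ∂μ := by
  rw [← integral_const_mul]
  refine integral_mono hvg (hwg.const_mul C) fun x => ?_
  rw [← mul_assoc]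
  exact mul_le_mul_of_nonneg_right (h x) (hg x)

end WeightedIntegral

theorem quadratic_form_equivalent_norm_general (β Λ : ℝ) (hβ0 : 0 < β)
    (hΛ : 0 < Λ)
    (hmin : ∀ s : ℝ, 0 ≤ s → Λ * fcoth s ≤ 1 + β * s ^ 2) :
    ∃ ε₀ > (0 : ℝ), ∀ ε : ℝ, 0 < ε → ε < ε₀ →
      ∃ c > (0 : ℝ), ∃ C > (0 : ℝ), ∀ ηhat : ℝ × ℝ → ℂ, Measurable ηhat →
        Integrable (fun k : ℝ × ℝ => (1 + β * (k.1 ^ 2 + k.2 ^ 2)) * ‖ηhat k‖ ^ 2) →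
        (c * ∫ k : ℝ × ℝ, (1 + (k.1 ^ 2 + k.2 ^ 2)) * ‖ηhat k‖ ^ 2) ≤
          (∫ k : ℝ × ℝ,
            (1 + β * (k.1 ^ 2 + k.2 ^ 2) -
              (1 - ε ^ 2) * Λ * (k.1 ^ 2 / (k.1 ^ 2 + k.2 ^ 2)) *
                fcoth (Real.sqrt (k.1 ^ 2 + k.2 ^ 2))) * ‖ηhat k‖ ^ 2) ∧
        (∫ k : ℝ × ℝ,
            (1 + β * (k.1 ^ 2 + k.2 ^ 2) -
              (1 - ε ^ 2) * Λ * (k.1 ^ 2 / (k.1 ^ 2 + k.2 ^ 2)) *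
                fcoth (Real.sqrt (k.1 ^ 2 + k.2 ^ 2))) * ‖ηhat k‖ ^ 2) ≤
          C * ∫ k : ℝ × ℝ, (1 + (k.1 ^ 2 + k.2 ^ 2)) * ‖ηhat k‖ ^ 2 := by
  refine ⟨1, one_pos, fun ε hε hε1 => ?_⟩
  have hm : 0 < min 1 β := lt_min one_pos hβ0
  refine ⟨ε ^ 2 * min 1 β, by positivity, 1 + β, by positivity, fun ηhat hη hInt => ?_⟩
  have hε2 : ε ^ 2 ≤ 1 := by nlinarith
  have hq (k : ℝ × ℝ) : 0 ≤ k.1 ^ 2 + k.2 ^ 2 := by positivity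
  have hg (k : ℝ × ℝ) : 0 ≤ ‖ηhat k‖ ^ 2 := by positivity
  have hgm : Measurable fun k => ‖ηhat k‖ ^ 2 := hη.norm.pow_const 2
  have hlow (k : ℝ × ℝ) : ε ^ 2 * min 1 β * (1 + (k.1 ^ 2 + k.2 ^ 2)) ≤ formSymbol β Λ ε k :=
    calc ε ^ 2 * min 1 β * (1 + (k.1 ^ 2 + k.2 ^ 2))
        = ε ^ 2 * (min 1 β * (1 + (k.1 ^ 2 + k.2 ^ 2))) := mul_assoc _ _ _
      _ ≤ ε ^ 2 * (1 + β * (k.1 ^ 2 + k.2 ^ 2)) := by gcongr; exact min_one_mul_le (hq k)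
      _ ≤ formSymbol β Λ ε k := sq_mul_le_formSymbol hΛ.le hε2 hmin k
  have hup (k : ℝ × ℝ) : formSymbol β Λ ε k ≤ (1 + β) * (1 + (k.1 ^ 2 + k.2 ^ 2)) :=
    (formSymbol_le hΛ.le hε2 k).trans (le_one_add_mul hβ0.le (hq k))
  have hIntH1 : Integrable fun k : ℝ × ℝ => (1 + (k.1 ^ 2 + k.2 ^ 2)) * ‖ηhat k‖ ^ 2 :=
    hInt.mul_of_abs_le (by fun_prop) hg fun k => by
      rw [abs_of_nonneg (by linarith [hq k]), le_inv_mul_iff₀ hm]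
      exact min_one_mul_le (hq k)
  have hIntB : Integrable fun k => formSymbol β Λ ε k * ‖ηhat k‖ ^ 2 :=
    hIntH1.mul_of_abs_le ((measurable_formSymbol β Λ ε).mul hgm).aestronglyMeasurable hg
      fun k => (abs_of_nonneg ((hlow k).trans' (by positivity))).trans_le (hup k)
  exact ⟨const_mul_integral_le_integral_mul hIntH1 hIntB hg hlow,
    integral_mul_le_const_mul_integral hIntB hIntH1 hg hup⟩

/-- The quadratic form
`B(η) = ∫ (η² + βη_x² + βη_z²) − (1−ε²)Λ ∫ η K₀η`, written in Fourier variables as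
`∫ (1 + β|k|² − (1−ε²)Λ(k₁²/|k|²)f(|k|)) |η̂(k)|² dk`, is, for all sufficiently small
`ε > 0`, bounded below by `c ∫ (1+|k|²)|η̂|²` and above by `C ∫ (1+|k|²)|η̂|²` with
constants independent of `η`; hence `B(·)^{1/2}` defines a norm equivalent to the `H¹`
norm. -/
theorem quadratic_form_equivalent_norm (β Λ ω : ℝ) (hβ0 : 0 < β) (hβ : β < 1 / 3)
    (hω : 0 < ω) (hΛ : 0 < Λ)
    (hmin : ∀ s : ℝ, 0 ≤ s → Λ * fcoth s ≤ 1 + β * s ^ 2)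
    (heq : 1 + β * ω ^ 2 = Λ * fcoth ω)
    (hstrict : ∀ s : ℝ, 0 ≤ s → s ≠ ω → Λ * fcoth s < 1 + β * s ^ 2) :
    ∃ ε₀ > (0 : ℝ), ∀ ε : ℝ, 0 < ε → ε < ε₀ →
      ∃ c > (0 : ℝ), ∃ C > (0 : ℝ), ∀ ηhat : ℝ × ℝ → ℂ, Measurable ηhat →
        Integrable (fun k : ℝ × ℝ => (1 + β * (k.1 ^ 2 + k.2 ^ 2)) * ‖ηhat k‖ ^ 2) →
        (c * ∫ k : ℝ × ℝ, (1 + (k.1 ^ 2 + k.2 ^ 2)) * ‖ηhat k‖ ^ 2) ≤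
          (∫ k : ℝ × ℝ,
            (1 + β * (k.1 ^ 2 + k.2 ^ 2) -
              (1 - ε ^ 2) * Λ * (k.1 ^ 2 / (k.1 ^ 2 + k.2 ^ 2)) *
                fcoth (Real.sqrt (k.1 ^ 2 + k.2 ^ 2))) * ‖ηhat k‖ ^ 2) ∧
        (∫ k : ℝ × ℝ,
            (1 + β * (k.1 ^ 2 + k.2 ^ 2) -
              (1 - ε ^ 2) * Λ * (k.1 ^ 2 / (k.1 ^ 2 + k.2 ^ 2)) *
                fcoth (Real.sqrt (k.1 ^ 2 + k.2 ^ 2))) * ‖ηhat k‖ ^ 2) ≤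
          C * ∫ k : ℝ × ℝ, (1 + (k.1 ^ 2 + k.2 ^ 2)) * ‖ηhat k‖ ^ 2 :=
  quadratic_form_equivalent_norm_general β Λ hβ0 hΛ hmin
end

section
/- Suppose T_ε : U_ε → ℝ is C¹ on an open subset U_ε of a Hilbert space, N_ε = {ζ ∈ U_ε : ζ ≠ 0, G_ε(ζ) = 0} with G_ε(ζ) = dT_ε[ζ](ζ), and suppose on N_ε one has the coercivity −dG_ε[ζ](ζ) = −d²T_ε[ζ](ζ,ζ) ≥ c‖ζ‖² and the lower bound ‖ζ‖ ≥ D₂ > 0. Then applying Ekeland's variational principle to T_ε restricted to N_ε yields a minimising sequence {ζ_n} ⊂ N_ε for T_ε|_{N_ε} with dT_ε[ζ_n] → 0 in the dual space as n → ∞. -/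
/-!
Ekeland's principle, applied on the closed set `N` with `ε = 1 / (n + 1)`, yields almost
minimisers `ζ` of `T` on `N` such that `T ζ ≤ T ξ + ε ‖ξ - ζ‖` for every `ξ ∈ N`.
To bound `dT[ζ] v`, step from `ζ` to `ζ + t v` and correct back onto `N` along `ζ` itself:
since `dG[ζ](ζ) ≤ -c ‖ζ‖² < 0`, the intermediate value theorem gives `s = O(t)` with
`G (ζ + t v + s ζ) = 0`, and since `dT[ζ](ζ) = G ζ = 0` the correction is invisible to first
order in `T`. Comparing with Ekeland's inequality gives
`-dT[ζ] v ≤ ε (1 + (‖dG[ζ]‖ + 1) / (c ‖ζ‖)) ‖v‖`, a constant made uniform by `‖ζ‖ ≥ D₂` and the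
bound on `dG`. This replaces the Lagrange multiplier of the constrained problem.
-/

open Filter Topology Set

theorem cauchySeq_of_mul_dist_le_sub {X : Type*} [PseudoMetricSpace X] {u : ℕ → X}
    {a : ℕ → ℝ} {ε : ℝ} (hε : 0 < ε) (ha : Antitone a) (ha' : BddBelow (range a))
    (hu : ∀ k j, k ≤ j → ε * dist (u k) (u j) ≤ a k - a j) : CauchySeq u := by
  refine cauchySeq_of_le_tendsto_0' (fun k => (a k - ⨅ j, a j) / ε) (fun k j hkj => ?_) ?_
  · rw [le_div_iff₀ hε, mul_comm]
    linarith [hu k j hkj, ciInf_le ha' j]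
  · simpa using ((tendsto_atTop_ciInf ha ha').sub_const (⨅ j, a j)).div_const ε

namespace Ekeland

variable {X : Type*} [PseudoMetricSpace X] {N : Set X} {f : X → ℝ} {ε : ℝ} {x y z : X}

def descentSet (N : Set X) (f : X → ℝ) (ε : ℝ) (y : X) : Set X :=
  {x ∈ N | f x + ε * dist x y ≤ f y}

theorem descentSet_subset : descentSet N f ε y ⊆ N := fun _ hx => hx.1

theorem mem_descentSet_self (hy : y ∈ N) : y ∈ descentSet N f ε y := ⟨hy, by simp⟩

theorem descentSet_subset_of_mem (hε : 0 ≤ ε) (hz : z ∈ descentSet N f ε y) :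
    descentSet N f ε z ⊆ descentSet N f ε y := fun x hx =>
  ⟨hx.1, by linarith [hx.2, hz.2, mul_le_mul_of_nonneg_left (dist_triangle x z y) hε]⟩

theorem le_of_mem_descentSet (hε : 0 ≤ ε) (hx : x ∈ descentSet N f ε y) : f x ≤ f y := by
  linarith [hx.2, mul_nonneg hε (dist_nonneg (x := x) (y := y))]

theorem isClosed_descentSet (hN : IsClosed N) (hf : LowerSemicontinuousOn f N) :
    IsClosed (descentSet N f ε y) := by
  have hg : LowerSemicontinuousOn (fun x => f x + ε * dist x y) N :=
    hf.add <| (by fun_prop : Continuous fun x => ε * dist x y).lowerSemicontinuous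
      |>.lowerSemicontinuousOn N
  obtain ⟨v, hv, hNv⟩ := lowerSemicontinuousOn_iff_preimage_Iic.mp hg (f y)
  change IsClosed (N ∩ (fun x => f x + ε * dist x y) ⁻¹' Iic (f y))
  exact hNv ▸ hN.inter hv

theorem exists_seq_mem_descentSet (hbdd : BddBelow (f '' N)) (hx : x ∈ N) :
    ∃ u : ℕ → X, u 0 = x ∧ (∀ k, u (k + 1) ∈ descentSet N f ε (u k)) ∧
      ∀ k, ∀ y ∈ descentSet N f ε (u k), f (u (k + 1)) ≤ f y + 1 / (k + 1) := by
  have step (k : ℕ) (y : N) : ∃ z : N, (z : X) ∈ descentSet N f ε y ∧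
      ∀ x ∈ descentSet N f ε y, f z ≤ f x + 1 / (k + 1) := by
    obtain ⟨_, ⟨z, hz, rfl⟩, hlt⟩ := Real.lt_sInf_add_pos
      ⟨_, mem_image_of_mem f (mem_descentSet_self y.2)⟩ (Nat.one_div_pos_of_nat (n := k))
    refine ⟨⟨z, descentSet_subset hz⟩, hz, fun x hx => ?_⟩
    have := csInf_le (hbdd.mono (image_mono descentSet_subset)) (mem_image_of_mem f hx)
    linarith
  choose next hnext using step
  let u : ℕ → N := fun k => Nat.rec (motive := fun _ => N) ⟨x, hx⟩ next k
  exact ⟨fun k => u k, rfl, fun k => (hnext k (u k)).1, fun k => (hnext k (u k)).2⟩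

theorem exists_le_forall_le_add_mul_dist [CompleteSpace X] (hN : IsClosed N)
    (hf : LowerSemicontinuousOn f N) (hbdd : BddBelow (f '' N)) (hε : 0 < ε) (hx : x ∈ N) :
    ∃ z ∈ N, f z ≤ f x ∧ ∀ y ∈ N, f z ≤ f y + ε * dist y z := by
  obtain ⟨u, hu0, hu_succ, hu_le⟩ := exists_seq_mem_descentSet (ε := ε) hbdd hx
  have hu_mem : ∀ k, u k ∈ N
    | 0 => hu0 ▸ hx
    | k + 1 => descentSet_subset (hu_succ k)
  have hanti : Antitone fun k => descentSet N f ε (u k) :=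
    antitone_nat_of_succ_le fun k => descentSet_subset_of_mem hε.le (hu_succ k)
  have hmem {k j : ℕ} (hkj : k ≤ j) : u j ∈ descentSet N f ε (u k) :=
    hanti hkj (mem_descentSet_self (hu_mem j))
  have hcauchy : CauchySeq u := by
    refine cauchySeq_of_mul_dist_le_sub (a := fun k => f (u k)) hε (fun k j hkj => ?_) ?_
      fun k j hkj => ?_
    · exact le_of_mem_descentSet hε.le (hmem hkj)
    · exact hbdd.mono (by rintro _ ⟨k, rfl⟩; exact mem_image_of_mem f (hu_mem k))
    · have h : f (u j) + ε * dist (u j) (u k) ≤ f (u k) := (hmem hkj).2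
      rw [dist_comm]
      linarith
  obtain ⟨z, hz⟩ := cauchySeq_tendsto_of_complete hcauchy
  have hzS (k : ℕ) : z ∈ descentSet N f ε (u k) :=
    (isClosed_descentSet hN hf).mem_of_tendsto hz (eventually_atTop.2 ⟨k, fun _ => hmem⟩)
  refine ⟨z, descentSet_subset (hzS 0), ?_, fun y hy => ?_⟩
  · exact hu0 ▸ le_of_mem_descentSet hε.le (hzS 0)
  -- A point `y` beating `z` lies in every `descentSet N f ε (u k)`, on which `u (k + 1)` is
  -- `1 / (k + 1)`-minimal, so `f z ≤ f (u (k + 1))` forces `f z ≤ f y`.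
  by_contra! hlt
  have hyS (k : ℕ) : y ∈ descentSet N f ε (u k) :=
    descentSet_subset_of_mem hε.le (hzS k) ⟨hy, hlt.le⟩
  have hlim : Tendsto (fun k : ℕ => f y + 1 / (k + 1 : ℝ)) atTop (𝓝 (f y)) := by
    simpa using (tendsto_one_div_add_atTop_nhds_zero_nat (𝕜 := ℝ)).const_add (f y)
  have hzy : f z ≤ f y := ge_of_tendsto hlim <| Eventually.of_forall fun k =>
    (le_of_mem_descentSet hε.le (hzS (k + 1))).trans (hu_le k y (hyS k))
  linarith [mul_nonneg hε.le (dist_nonneg (x := y) (y := z))]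

theorem exists_seq_tendsto_sInf_forall_le_add_mul_dist [CompleteSpace X] (hN : IsClosed N)
    (hf : LowerSemicontinuousOn f N) (hbdd : BddBelow (f '' N)) (hne : N.Nonempty) :
    ∃ u : ℕ → X, (∀ n, u n ∈ N) ∧ Tendsto (fun n => f (u n)) atTop (𝓝 (sInf (f '' N))) ∧
      ∀ n, ∀ y ∈ N, f (u n) ≤ f y + 1 / (n + 1) * dist y (u n) := by
  have hε (n : ℕ) : (0 : ℝ) < 1 / (n + 1) := Nat.one_div_pos_of_nat
  have hx (n : ℕ) : ∃ x ∈ N, f x < sInf (f '' N) + 1 / (n + 1) := by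
    obtain ⟨_, ⟨x, hx, rfl⟩, hlt⟩ := Real.lt_sInf_add_pos (hne.image f) (hε n)
    exact ⟨x, hx, hlt⟩
  choose x hxN hxlt using hx
  choose u huN hux humin using fun n =>
    exists_le_forall_le_add_mul_dist hN hf hbdd (hε n) (hxN n)
  refine ⟨u, huN, ?_, humin⟩
  refine tendsto_of_tendsto_of_tendsto_of_le_of_le tendsto_const_nhds
    (by simpa using (tendsto_one_div_add_atTop_nhds_zero_nat (𝕜 := ℝ)).const_add (sInf (f '' N)))
    (fun n => csInf_le hbdd (mem_image_of_mem f (huN n))) fun n => ?_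
  simpa using (hux n).trans (hxlt n).le

end Ekeland

theorem zero_mem_uIcc_of_abs_sub_le {p q a b e : ℝ} (hp : |p - (a - b)| ≤ e)
    (hq : |q - (a + b)| ≤ e) (hab : |a| + e < |b|) : (0 : ℝ) ∈ uIcc p q := by
  rw [abs_le] at hp hq
  obtain ⟨ha₁, ha₂⟩ := abs_le.1 (le_refl |a|)
  rcases abs_cases b with ⟨hb, -⟩ | ⟨hb, -⟩
  · exact mem_uIcc.2 (.inl ⟨by linarith, by linarith⟩)
  · exact mem_uIcc.2 (.inr ⟨by linarith, by linarith⟩)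

section Calculus

variable {E : Type*} [NormedAddCommGroup E] [NormedSpace ℝ E]

theorem norm_smul_add_smul_le {t s K : ℝ} {u v : E} (ht : 0 ≤ t) (hs : |s| ≤ K * t) :
    ‖t • v + s • u‖ ≤ (‖v‖ + K * ‖u‖) * t :=
  calc ‖t • v + s • u‖ ≤ t * ‖v‖ + |s| * ‖u‖ := by
        simpa [norm_smul, abs_of_nonneg ht] using norm_add_le (t • v) (s • u)
    _ ≤ t * ‖v‖ + K * t * ‖u‖ := by gcongr
    _ = (‖v‖ + K * ‖u‖) * t := by ring

theorem eventually_exists_zero_add_smul_add_smul {G : E → ℝ} {L : E →L[ℝ] ℝ} {V : Set E}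
    {x u v : E} {K : ℝ} (hV : V ∈ 𝓝 x) (hGc : ContinuousOn G V) (hG : HasFDerivAt G L x)
    (hGx : G x = 0) (hK : |L v| < K * |L u|) :
    ∀ᶠ t in 𝓝[>] 0, ∃ s, |s| ≤ K * t ∧ x + (t • v + s • u) ∈ V ∧
      G (x + (t • v + s • u)) = 0 := by
  set B := ‖v‖ + K * ‖u‖
  obtain ⟨η, hη, hηB⟩ := exists_pos_mul_lt (sub_pos.2 hK) B
  have hloc : ∀ᶠ w in 𝓝 0, x + w ∈ V ∧ |G (x + w) - L w| ≤ η * ‖w‖ := by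
    have hxw : Tendsto (fun w : E => x + w) (𝓝 0) (𝓝 x) := by
      simpa using (continuous_const_add x).tendsto 0
    refine (hxw.eventually hV).and ?_
    simpa [hGx] using (hasFDerivAt_iff_isLittleO_nhds_zero.mp hG).bound hη
  obtain ⟨r, hr, hball⟩ := Metric.eventually_nhds_iff.mp hloc
  have hBt : ∀ᶠ t in 𝓝 (0 : ℝ), B * t < r :=
    ((continuous_const_mul B).tendsto' 0 0 (mul_zero B)).eventually (gt_mem_nhds hr)
  filter_upwards [self_mem_nhdsWithin, nhdsWithin_le_nhds hBt] with t (ht : 0 < t) htr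
  have hK0 : 0 ≤ K * t :=
    mul_nonneg (pos_of_mul_pos_left ((abs_nonneg _).trans_lt hK) (abs_nonneg _)).le ht.le
  have hw (s : ℝ) (hs : |s| ≤ K * t) : x + (t • v + s • u) ∈ V ∧
      |G (x + (t • v + s • u)) - (t * L v + s * L u)| ≤ η * (B * t) := by
    have hnorm := norm_smul_add_smul_le (u := u) (v := v) ht.le hs
    obtain ⟨hmem, hbound⟩ := hball (by simpa using hnorm.trans_lt htr)
    refine ⟨hmem, ?_⟩
    simpa using hbound.trans (by gcongr)
  have hcont :
      ContinuousOn (fun s : ℝ => G (x + (t • v + s • u))) (uIcc (-(K * t)) (K * t)) := by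
    refine hGc.comp (by fun_prop) fun s hs => (hw s ?_).1
    rw [uIcc_of_le (by linarith)] at hs
    exact abs_le.2 hs
  have hleft : |G (x + (t • v + (-(K * t)) • u)) - (t * L v - K * t * L u)| ≤ η * (B * t) := by
    convert (hw _ (by rw [abs_neg, abs_of_nonneg hK0])).2 using 3; ring
  have hright : |G (x + (t • v + (K * t) • u)) - (t * L v + K * t * L u)| ≤ η * (B * t) :=
    (hw _ (abs_of_nonneg hK0).le).2
  have hgap : |t * L v| + η * (B * t) < |K * t * L u| := by
    rw [abs_mul, abs_mul, abs_of_pos ht, abs_of_nonneg hK0]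
    nlinarith [mul_lt_mul_of_pos_left hηB ht]
  obtain ⟨s, hs, hs0⟩ :=
    intermediate_value_uIcc hcont (zero_mem_uIcc_of_abs_sub_le hleft hright hgap)
  rw [uIcc_of_le (by linarith)] at hs
  exact ⟨s, abs_le.2 hs, (hw s (abs_le.2 hs)).1, hs0⟩

theorem neg_le_mul_of_forall_le_add_mul_norm {T : E → ℝ} {L : E →L[ℝ] ℝ} {S : Set E} {x : E}
    {ε a B : ℝ} (hT : HasFDerivAt T L x) (hε : 0 ≤ ε)
    (hmin : ∀ y ∈ S, T x ≤ T y + ε * ‖y - x‖)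
    (hw : ∀ᶠ t in 𝓝[>] 0, ∃ w, x + w ∈ S ∧ ‖w‖ ≤ B * t ∧ L w = t * a) :
    -a ≤ ε * B := by
  suffices h : ∀ η > 0, -a ≤ (ε + η) * B by
    have hlim : Tendsto (fun η => (ε + η) * B) (𝓝[>] 0) (𝓝 (ε * B)) :=
      tendsto_nhdsWithin_of_tendsto_nhds
        ((by fun_prop : Continuous fun η : ℝ => (ε + η) * B).tendsto' 0 _ (by simp))
    exact ge_of_tendsto hlim (eventually_mem_nhdsWithin.mono h)
  intro η hη
  obtain ⟨r, hr, hball⟩ :=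
    Metric.eventually_nhds_iff.mp ((hasFDerivAt_iff_isLittleO_nhds_zero.mp hT).bound hη)
  have hBt : ∀ᶠ t in 𝓝 (0 : ℝ), B * t < r :=
    ((continuous_const_mul B).tendsto' 0 0 (mul_zero B)).eventually (gt_mem_nhds hr)
  obtain ⟨t, ⟨w, hwS, hwB, hLw⟩, ht, htr⟩ :=
    (hw.and (Eventually.and self_mem_nhdsWithin (nhdsWithin_le_nhds hBt))).exists
  have hTmin : T x ≤ T (x + w) + ε * ‖w‖ := by simpa using hmin _ hwS
  have hTw : T (x + w) - T x - L w ≤ η * ‖w‖ :=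
    (le_abs_self _).trans (by simpa using hball (by simpa using hwB.trans_lt htr))
  have hηw : (ε + η) * ‖w‖ ≤ (ε + η) * (B * t) := by gcongr
  refine le_of_mul_le_mul_left ?_ (show (0 : ℝ) < t from ht)
  linarith

theorem norm_le_of_forall_le_add_mul_norm_of_eq_zero {T G : E → ℝ} {L L' : E →L[ℝ] ℝ}
    {V : Set E} {x : E} {ε : ℝ} (hV : V ∈ 𝓝 x) (hT : HasFDerivAt T L x)
    (hGc : ContinuousOn G V) (hG : HasFDerivAt G L' x) (hGx : G x = 0) (hLx : L x = 0)
    (hL'x : L' x ≠ 0) (hε : 0 ≤ ε) (hmin : ∀ y ∈ V, G y = 0 → T x ≤ T y + ε * ‖y - x‖) :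
    ‖L‖ ≤ ε * (1 + (‖L'‖ + 1) * ‖x‖ / |L' x|) := by
  set C := 1 + (‖L'‖ + 1) * ‖x‖ / |L' x|
  suffices h : ∀ v, -L v ≤ ε * C * ‖v‖ by
    refine L.opNorm_le_bound (by positivity) fun v => abs_le.2 ⟨by linarith [h v], ?_⟩
    simpa using h (-v)
  intro v
  rcases eq_or_ne v 0 with rfl | hv
  · simp
  set K := (‖L'‖ + 1) * ‖v‖ / |L' x|
  have hK : |L' v| < K * |L' x| := by
    rw [div_mul_cancel₀ _ (abs_ne_zero.2 hL'x)]
    have := L'.le_opNorm v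
    rw [Real.norm_eq_abs] at this
    linarith [norm_pos_iff.2 hv]
  have key := neg_le_mul_of_forall_le_add_mul_norm (S := {y ∈ V | G y = 0}) (a := L v)
    (B := ‖v‖ + K * ‖x‖) hT hε (fun y hy => hmin y hy.1 hy.2) (by
      filter_upwards [eventually_exists_zero_add_smul_add_smul hV hGc hG hGx hK,
        self_mem_nhdsWithin] with t ⟨s, hs, hsV, hsG⟩ (ht : 0 < t)
      exact ⟨t • v + s • x, ⟨hsV, hsG⟩, norm_smul_add_smul_le ht.le hs, by simp [hLx]⟩)
  calc -L v ≤ ε * (‖v‖ + K * ‖x‖) := key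
    _ = ε * C * ‖v‖ := by simp only [C, K]; ring

theorem div_abs_le_of_coercive {L' : E →L[ℝ] ℝ} {x : E} {c D M : ℝ} (hc : 0 < c)
    (hD : 0 < D) (hDx : D ≤ ‖x‖) (hM : ‖L'‖ ≤ M) (hcoer : c * ‖x‖ ^ 2 ≤ -L' x) :
    (‖L'‖ + 1) * ‖x‖ / |L' x| ≤ (M + 1) / (c * D) := by
  have hx : 0 < ‖x‖ := hD.trans_le hDx
  have hM1 : 0 ≤ M + 1 := by linarith [norm_nonneg L']
  calc (‖L'‖ + 1) * ‖x‖ / |L' x| ≤ (M + 1) * ‖x‖ / (c * ‖x‖ ^ 2) := by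
        gcongr
        exact hcoer.trans (neg_le_abs _)
    _ = (M + 1) / (c * ‖x‖) := by field_simp
    _ ≤ (M + 1) / (c * D) := by gcongr

end Calculus

/-- (Theorem `Existence of a good minimising sequence`.)  Under the
coercivity `−d²T_ε[ζ](ζ,ζ) ≥ c‖ζ‖²` and the lower bound `‖ζ‖ ≥ D₂` on the natural
constraint set `N_ε = {ζ ∈ U : ζ ≠ 0, dT_ε[ζ](ζ) = 0}`, Ekeland's variational principle
yields a minimising sequence `{ζ_n} ⊂ N_ε` for `T_ε|_{N_ε}` with `dT_ε[ζ_n] → 0`. -/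
theorem exists_palais_smale_minimising_sequence {X : Type*} [NormedAddCommGroup X]
    [InnerProductSpace ℝ X] [CompleteSpace X]
    (U : Set X) (hU : IsOpen U) (T : X → ℝ)
    (DT : X → (X →L[ℝ] ℝ)) (DG : X → (X →L[ℝ] ℝ))
    (hT : ∀ ζ ∈ U, HasFDerivAt T (DT ζ) ζ)
    (hG : ∀ ζ ∈ U, HasFDerivAt (fun ξ : X => DT ξ ξ) (DG ζ) ζ)
    (N : Set X) (hN : N = {ζ ∈ U | ζ ≠ 0 ∧ DT ζ ζ = 0})
    (c D₂ : ℝ) (hc : 0 < c) (hD₂ : 0 < D₂)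
    (hcoer : ∀ ζ ∈ N, c * ‖ζ‖ ^ 2 ≤ -(DG ζ ζ))
    (hlow : ∀ ζ ∈ N, D₂ ≤ ‖ζ‖)
    (hne : N.Nonempty) (hbdd : BddBelow (T '' N)) (hclosed : IsClosed N)
    (hDGbdd : ∃ M : ℝ, ∀ ζ ∈ N, ‖DG ζ‖ ≤ M) :
    ∃ ζ : ℕ → X, (∀ n, ζ n ∈ N) ∧
      Tendsto (fun n => T (ζ n)) atTop (nhds (sInf (T '' N))) ∧
      Tendsto (fun n => ‖DT (ζ n)‖) atTop (nhds 0) := by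
  obtain ⟨M, hM⟩ := hDGbdd
  have hmemN {ζ : X} : ζ ∈ N ↔ ζ ∈ U ∧ ζ ≠ 0 ∧ DT ζ ζ = 0 := by rw [hN]; rfl
  have hTN : LowerSemicontinuousOn T N := ContinuousOn.lowerSemicontinuousOn fun ζ hζ =>
    (hT ζ (hmemN.1 hζ).1).continuousAt.continuousWithinAt
  obtain ⟨ζ, hζN, hζT, hζmin⟩ :=
    Ekeland.exists_seq_tendsto_sInf_forall_le_add_mul_dist hclosed hTN hbdd hne
  refine ⟨ζ, hζN, hζT, ?_⟩
  have hbound (n : ℕ) : ‖DT (ζ n)‖ ≤ 1 / (n + 1) * (1 + (M + 1) / (c * D₂)) := by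
    obtain ⟨hζU, hζ0, hζcrit⟩ := hmemN.1 (hζN n)
    have hDGζ : DG (ζ n) (ζ n) ≠ 0 := by
      linarith [hcoer _ (hζN n), mul_pos hc (pow_pos (norm_pos_iff.2 hζ0) 2)]
    refine (norm_le_of_forall_le_add_mul_norm_of_eq_zero (V := U ∩ {0}ᶜ) (ε := 1 / (n + 1))
      ((hU.inter isOpen_compl_singleton).mem_nhds ⟨hζU, hζ0⟩) (hT _ hζU)
      (fun y hy => (hG y hy.1).continuousAt.continuousWithinAt) (hG _ hζU) hζcrit hζcrit hDGζ
      (by positivity) fun y hy hy0 => ?_).trans ?_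
    · simpa [dist_eq_norm] using hζmin n y (hmemN.2 ⟨hy.1, hy.2, hy0⟩)
    · have := div_abs_le_of_coercive hc hD₂ (hlow _ (hζN n)) (hM _ (hζN n)) (hcoer _ (hζN n))
      gcongr
  exact squeeze_zero (fun n => norm_nonneg _) hbound
    (by simpa using (tendsto_one_div_add_atTop_nhds_zero_nat (𝕜 := ℝ)).mul_const _)
end
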